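/- arXiv:1908.04957 — 6 statements merged into one kernel-verified Lean document; each statement's English description precedes it below -/
import Mathlib

section
/- Let q ≥ 1 and p ≥ 1, and let A ∈ ℝ^{p×q} satisfy AAᵀ = Σ = Σ_{j=1}^q λ_j v_j v_jᵀ, where v₁,…,v_q ∈ ℝ^p are orthonormal and λ₁ ≥ λ₂ ≥ ⋯ ≥ λ_q > 0 (so A has rank q). Let g = (g₁,…,g_q) be a standard Gaussian vector in ℝ^q. Then the matrix K := E[ A g gᵀ Aᵀ / ‖Ag‖² ] is well defined (Ag ≠ 0 almost surely and the integrand is bounded) and K = Σ_{j=1}^q θ_j v_j v_jᵀ, where θ_j := E[ λ_j g_j² / (λ₁g₁² + ⋯ + λ_q g_q²) ]. -/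
/-!
Write `V` for the `p × q` matrix with columns `v_j` and `B := V diag(√λ)`. Then
`AAᵀ = BBᵀ`, so the Gaussian vectors `Ag` and `Bg` have the same characteristic function
`t ↦ exp(-tᵀAAᵀt/2)`, hence the same law, and every claim may be checked for `Bg` instead.
As `V` has orthonormal columns, `Bg = Vy` with `y_j = √λ_j g_j` and `‖Bg‖ = ‖y‖`, so
`Bg(Bg)ᵀ/‖Bg‖² = V (yyᵀ/‖y‖²) Vᵀ`. Flipping the sign of `g_j` preserves the law of `g` and
negates the off-diagonal entries in row and column `j` of `yyᵀ/‖y‖²`, so their expectations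
vanish; the diagonal entries are `λ_j g_j²/∑ λ_k g_k²`.
-/

open MeasureTheory ProbabilityTheory Matrix

/-- Law of a standard Gaussian vector in `ℝ^d`: i.i.d. `N(0,1)` coordinates. -/
noncomputable def stdGaussian (d : ℕ) : Measure (Fin d → ℝ) :=
  Measure.pi fun _ => gaussianReal 0 1

open WithLp

section MatrixAlgebra

variable {m n : Type*}

lemma of_mul_transpose_eq_one [Fintype m] [DecidableEq n] {v : n → m → ℝ}
    (hv : ∀ j k, ∑ i, v j i * v k i = if j = k then (1 : ℝ) else 0) : of v * (of v)ᵀ = 1 := by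
  ext j k
  simpa [mul_apply, one_apply] using hv j k

lemma sum_smul_vecMulVec_self_eq_mul_transpose [Fintype n] [DecidableEq n] (v : n → m → ℝ)
    {lam : n → ℝ} (hlam : ∀ j, 0 ≤ lam j) :
    ∑ j, lam j • vecMulVec (v j) (v j)
      = ((of v)ᵀ * diagonal fun j => √(lam j)) * ((of v)ᵀ * diagonal fun j => √(lam j))ᵀ := by
  rw [transpose_mul, diagonal_transpose, transpose_transpose, Matrix.mul_assoc,
    ← Matrix.mul_assoc (diagonal _), diagonal_mul_diagonal]
  simp_rw [Real.mul_self_sqrt (hlam _)]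
  ext i i'
  simp [Matrix.sum_apply, mul_apply, vecMulVec_apply, diagonal_apply, mul_comm, mul_left_comm]

lemma eq_zero_of_mul_diagonal_mulVec_eq_zero [Fintype m] [Fintype n] [DecidableEq n]
    {U : Matrix m n ℝ} (hU : Uᵀ * U = 1) {c : n → ℝ} (hc : ∀ j, c j ≠ 0) {x : n → ℝ}
    (hx : (U * diagonal c) *ᵥ x = 0) : x = 0 := by
  have h := congrArg (Uᵀ *ᵥ ·) hx
  simp only [mulVec_mulVec, ← Matrix.mul_assoc, hU, Matrix.one_mul, mulVec_zero] at h
  funext j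
  have hj := congrFun h j
  rw [mulVec_diagonal] at hj
  exact (mul_eq_zero.mp hj).resolve_left (hc j)

lemma sum_sq_mulVec_of_transpose_mul_self [Fintype m] [Fintype n] [DecidableEq n]
    {U : Matrix m n ℝ} (hU : Uᵀ * U = 1) (y : n → ℝ) :
    ∑ k, (U *ᵥ y) k ^ 2 = ∑ j, y j ^ 2 :=
  calc ∑ k, (U *ᵥ y) k ^ 2 = (U *ᵥ y) ⬝ᵥ (U *ᵥ y) := by simp only [dotProduct, sq]
    _ = y ⬝ᵥ ((Uᵀ * U) *ᵥ y) := by rw [← mulVec_mulVec, dotProduct_mulVec y, vecMul_transpose]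
    _ = ∑ j, y j ^ 2 := by simp only [hU, one_mulVec, dotProduct, sq]

end MatrixAlgebra

noncomputable def outerDivNormSq {n : Type*} [Fintype n] (y : n → ℝ) : Matrix n n ℝ :=
  of fun i i' => y i * y i' / ∑ k, y k ^ 2

section OuterDivNormSq

variable {m n : Type*} [Fintype n]

lemma abs_outerDivNormSq_apply_le_one (y : n → ℝ) (i i' : n) : |outerDivNormSq y i i'| ≤ 1 := by
  have hle : ∀ j, y j ^ 2 ≤ ∑ k, y k ^ 2 := fun j =>
    Finset.single_le_sum (fun k _ => sq_nonneg (y k)) (Finset.mem_univ j)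
  rcases (Finset.sum_nonneg fun k _ => sq_nonneg (y k) : 0 ≤ ∑ k, y k ^ 2).eq_or_lt with h0 | hpos
  · simp [outerDivNormSq, ← h0]
  · rw [outerDivNormSq, of_apply, abs_div, abs_of_pos hpos, div_le_one hpos, abs_mul]
    nlinarith [sq_abs (y i), sq_abs (y i'), sq_nonneg (|y i| - |y i'|), hle i, hle i']

lemma Measurable.outerDivNormSq_apply {α : Type*} [MeasurableSpace α] {f : α → n → ℝ}
    (hf : Measurable f) (i i' : n) : Measurable fun a => outerDivNormSq (f a) i i' := by
  unfold outerDivNormSq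
  fun_prop

lemma integrable_outerDivNormSq_apply {α : Type*} [MeasurableSpace α] {μ : Measure α}
    [IsFiniteMeasure μ] {f : α → n → ℝ} (hf : AEMeasurable f μ) (i i' : n) :
    Integrable (fun a => outerDivNormSq (f a) i i') μ :=
  .of_bound ((measurable_id.outerDivNormSq_apply i i').comp_aemeasurable hf).aestronglyMeasurable 1
    (ae_of_all _ fun a => abs_outerDivNormSq_apply_le_one (f a) i i')

lemma outerDivNormSq_mulVec [Fintype m] [DecidableEq n] {U : Matrix m n ℝ} (hU : Uᵀ * U = 1)
    (y : n → ℝ) : outerDivNormSq (U *ᵥ y) = U * outerDivNormSq y * Uᵀ := by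
  ext i i'
  rw [outerDivNormSq, of_apply, sum_sq_mulVec_of_transpose_mul_self hU]
  simp only [outerDivNormSq, mul_apply, of_apply, transpose_apply, mulVec, dotProduct,
    Finset.sum_mul, Finset.mul_sum, Finset.sum_div]
  refine Finset.sum_congr rfl fun j _ => Finset.sum_congr rfl fun k _ => ?_
  ring

lemma outerDivNormSq_diagonal_sqrt_mulVec_apply_self [DecidableEq n] {lam : n → ℝ}
    (hlam : ∀ j, 0 ≤ lam j) (x : n → ℝ) (j : n) :
    outerDivNormSq ((diagonal fun k => √(lam k)) *ᵥ x) j j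
      = lam j * x j ^ 2 / ∑ k, lam k * x k ^ 2 := by
  simp only [outerDivNormSq, of_apply, mulVec_diagonal, ← sq, mul_pow, Real.sq_sqrt (hlam _)]

end OuterDivNormSq

section StdGaussian

variable {m : Type*} {d : ℕ}

instance isProbabilityMeasure_stdGaussian : IsProbabilityMeasure (stdGaussian d) := by
  unfold _root_.stdGaussian
  infer_instance

lemma charFun_map_mulVec_stdGaussian [Fintype m] (M : Matrix m (Fin d) ℝ) (t : EuclideanSpace ℝ m) :
    charFun ((stdGaussian d).map fun x => toLp 2 (M *ᵥ x)) t
      = Complex.exp (-(ofLp t ⬝ᵥ (M * Mᵀ) *ᵥ ofLp t) / 2) := by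
  have hinner : ∀ x : Fin d → ℝ, inner ℝ (toLp 2 (M *ᵥ x)) t
      = inner ℝ (toLp 2 x) (toLp 2 (Mᵀ *ᵥ ofLp t)) := fun x => by
    simp only [EuclideanSpace.inner_eq_star_dotProduct, star_trivial, mulVec_transpose,
      dotProduct_mulVec]
  have hnorm : ‖toLp 2 (Mᵀ *ᵥ ofLp t)‖ ^ 2 = ofLp t ⬝ᵥ (M * Mᵀ) *ᵥ ofLp t := by
    rw [← real_inner_self_eq_norm_sq, EuclideanSpace.inner_eq_star_dotProduct, star_trivial,
      ← mulVec_mulVec, dotProduct_mulVec (ofLp t) M, ofLp_toLp, mulVec_transpose]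
  rw [charFun_apply, integral_map (by fun_prop) (by fun_prop)]
  simp_rw [hinner]
  rw [← integral_map (f := fun y => Complex.exp (inner ℝ y (toLp 2 (Mᵀ *ᵥ ofLp t)) * Complex.I))
      (by fun_prop) (by fun_prop),
    ← charFun_apply, _root_.stdGaussian, map_pi_eq_stdGaussian, charFun_stdGaussian, ← hnorm]
  push_cast
  rfl

lemma identDistrib_mulVec_stdGaussian [Fintype m] {M N : Matrix m (Fin d) ℝ} (h : M * Mᵀ = N * Nᵀ) :
    IdentDistrib (M *ᵥ ·) (N *ᵥ ·) (stdGaussian d) (stdGaussian d) where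
  aemeasurable_fst := by fun_prop
  aemeasurable_snd := by fun_prop
  map_eq := by
    have hLp : ((stdGaussian d).map fun x => toLp 2 (M *ᵥ x))
        = (stdGaussian d).map fun x => toLp 2 (N *ᵥ x) :=
      Measure.ext_of_charFun <| funext fun t => by
        rw [charFun_map_mulVec_stdGaussian, charFun_map_mulVec_stdGaussian, h]
    have := congrArg (Measure.map (ofLp (p := 2))) hLp
    rwa [Measure.map_map (by fun_prop) (by fun_prop), Measure.map_map (by fun_prop) (by fun_prop)]
      at this

lemma stdGaussian_setOf_mulVec_eq_zero (hd : 1 ≤ d) {M : Matrix m (Fin d) ℝ}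
    (hM : ∀ x, M *ᵥ x = 0 → x = 0) : stdGaussian d {x | M *ᵥ x = 0} = 0 := by
  have hker : {x | M *ᵥ x = 0} = {0} :=
    Set.eq_singleton_iff_unique_mem.mpr ⟨mulVec_zero M, hM⟩
  have := nullSingletonClass_gaussianReal (μ := 0) (one_ne_zero : (1 : NNReal) ≠ 0)
  have := Measure.pi_nullSingletonClass (μ := fun _ : Fin d => gaussianReal 0 1) ⟨0, hd⟩
  rw [hker]
  exact measure_singleton (μ := Measure.pi fun _ : Fin d => gaussianReal 0 1) _

lemma integral_outerDivNormSq_diagonal_mulVec_of_ne (c : Fin d → ℝ) {j k : Fin d} (hjk : j ≠ k) :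
    ∫ x, outerDivNormSq (diagonal c *ᵥ x) j k ∂stdGaussian d = 0 := by
  set R : Matrix (Fin d) (Fin d) ℝ := diagonal fun l => if l = j then -1 else 1
  have hR : Rᵀ * R = 1 := by
    rw [diagonal_transpose, diagonal_mul_diagonal, ← diagonal_one]
    congr 1
    ext l
    split_ifs <;> norm_num
  have hflip (x : Fin d → ℝ) : outerDivNormSq (diagonal c *ᵥ (R *ᵥ x)) j k
      = -outerDivNormSq (diagonal c *ᵥ x) j k := by
    have hcomm : diagonal c * R = R * diagonal c := by
      simp only [R, diagonal_mul_diagonal, mul_comm]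
    rw [mulVec_mulVec, hcomm, ← mulVec_mulVec, outerDivNormSq_mulVec hR]
    simp [R, diagonal_mul, mul_diagonal, hjk.symm]
  have hid := identDistrib_mulVec_stdGaussian (M := R) (N := 1)
    (by rw [transpose_one, Matrix.mul_one]; exact mul_eq_one_comm.mp hR)
  have := (hid.comp (Measurable.outerDivNormSq_apply (f := (diagonal c *ᵥ ·)) (by fun_prop) j k)
    ).integral_eq
  simp only [Function.comp_def, hflip, one_mulVec, integral_neg] at this
  linarith

lemma integral_outerDivNormSq_mul_diagonal_mulVec [Fintype m] {U : Matrix m (Fin d) ℝ}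
    (hU : Uᵀ * U = 1) (c : Fin d → ℝ) (i i' : m) :
    ∫ x, outerDivNormSq ((U * diagonal c) *ᵥ x) i i' ∂stdGaussian d
      = ∑ j, U i j * U i' j * ∫ x, outerDivNormSq (diagonal c *ᵥ x) j j ∂stdGaussian d := by
  have hint (j k : Fin d) : Integrable (fun x => outerDivNormSq (diagonal c *ᵥ x) j k)
      (stdGaussian d) :=
    integrable_outerDivNormSq_apply (by fun_prop) j k
  have hentry (x : Fin d → ℝ) : outerDivNormSq ((U * diagonal c) *ᵥ x) i i'
      = ∑ j, ∑ k, U i j * U i' k * outerDivNormSq (diagonal c *ᵥ x) j k := by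
    simp only [← mulVec_mulVec, outerDivNormSq_mulVec hU, mul_apply, transpose_apply,
      Finset.sum_mul]
    rw [Finset.sum_comm]
    exact Finset.sum_congr rfl fun j _ => Finset.sum_congr rfl fun k _ => by ring
  simp_rw [hentry]
  rw [integral_finsetSum _ fun j _ => integrable_finsetSum _ fun k _ => (hint j k).const_mul _]
  refine Finset.sum_congr rfl fun j _ => ?_
  rw [integral_finsetSum _ fun k _ => (hint j k).const_mul _]
  refine Finset.sum_eq_single j (fun k _ hkj => ?_) (by simp) |>.trans (integral_const_mul _ _)
  rw [integral_const_mul, integral_outerDivNormSq_diagonal_mulVec_of_ne c hkj.symm, mul_zero]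

end StdGaussian

theorem stmt4_general (p q : ℕ) (hq : 1 ≤ q)
    {Ω : Type*} [MeasurableSpace Ω] (μ : Measure Ω) [IsProbabilityMeasure μ]
    (g : Ω → Fin q → ℝ) (hg : Measure.map g μ = stdGaussian q)
    (A : Matrix (Fin p) (Fin q) ℝ)
    (v : Fin q → Fin p → ℝ) (lam : Fin q → ℝ)
    (hortho : ∀ j k, (∑ i, v j i * v k i) = if j = k then (1 : ℝ) else 0)
    (hpos : ∀ j, 0 < lam j)
    (hspec : A * Aᵀ = ∑ j, lam j • Matrix.vecMulVec (v j) (v j)) :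
    μ {ω | A.mulVec (g ω) = 0} = 0 ∧
    (∀ i i' : Fin p, ∀ᵐ ω ∂μ,
      |A.mulVec (g ω) i * A.mulVec (g ω) i' / (∑ k, A.mulVec (g ω) k ^ 2)| ≤ 1) ∧
    (∀ i i' : Fin p, Integrable
      (fun ω => A.mulVec (g ω) i * A.mulVec (g ω) i' / (∑ k, A.mulVec (g ω) k ^ 2)) μ) ∧
    (Matrix.of (fun i i' : Fin p =>
        ∫ ω, A.mulVec (g ω) i * A.mulVec (g ω) i' / (∑ k, A.mulVec (g ω) k ^ 2) ∂μ)
      = ∑ j, (∫ ω, lam j * g ω j ^ 2 / (∑ k, lam k * g ω k ^ 2) ∂μ) •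
          Matrix.vecMulVec (v j) (v j)) := by
  have hV : (of v)ᵀᵀ * (of v)ᵀ = 1 := of_mul_transpose_eq_one hortho
  set c : Fin q → ℝ := fun j => √(lam j)
  have hlam (j : Fin q) : 0 ≤ lam j := (hpos j).le
  have hg' : IdentDistrib g id μ (stdGaussian q) :=
    ⟨.of_map_ne_zero (hg ▸ IsProbabilityMeasure.ne_zero _), aemeasurable_id,
      by rwa [Measure.map_id]⟩
  have hlaw : IdentDistrib (fun ω => A *ᵥ g ω) (((of v)ᵀ * diagonal c) *ᵥ ·) μ (stdGaussian q) :=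
    (hg'.comp (u := (A *ᵥ ·)) (by fun_prop)).trans <| identDistrib_mulVec_stdGaussian <|
      hspec.trans (sum_smul_vecMulVec_self_eq_mul_transpose v hlam)
  refine ⟨?_, fun i i' => ae_of_all _ fun ω => abs_outerDivNormSq_apply_le_one _ i i',
    fun i i' => integrable_outerDivNormSq_apply hlaw.aemeasurable_fst i i', ?_⟩
  · refine (hlaw.measure_mem_eq (measurableSet_singleton 0)).trans ?_
    exact stdGaussian_setOf_mulVec_eq_zero hq fun x =>
      eq_zero_of_mul_diagonal_mulVec_eq_zero hV fun j => (Real.sqrt_pos.mpr (hpos j)).ne'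
  · ext i i'
    have hθ (j : Fin q) : ∫ ω, lam j * g ω j ^ 2 / (∑ k, lam k * g ω k ^ 2) ∂μ
        = ∫ x, outerDivNormSq (diagonal c *ᵥ x) j j ∂stdGaussian q := by
      simp_rw [← outerDivNormSq_diagonal_sqrt_mulVec_apply_self hlam]
      exact (hg'.comp (Measurable.outerDivNormSq_apply (by fun_prop) j j)).integral_eq
    refine (hlaw.comp (measurable_id.outerDivNormSq_apply i i')).integral_eq.trans <|
      (integral_outerDivNormSq_mul_diagonal_mulVec hV c i i').trans ?_
    simp only [Matrix.sum_apply, Matrix.smul_apply, vecMulVec_apply, smul_eq_mul, hθ,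
      transpose_apply, of_apply]
    exact Finset.sum_congr rfl fun j _ => mul_comm _ _

/-- If `AAᵀ = Σ = ∑_j λ_j v_j v_jᵀ` with orthonormal `v_j` and `λ₁ ≥ ⋯ ≥ λ_q > 0`, and
`g` is standard Gaussian in `ℝ^q`, then `K := E[AggᵀAᵀ/‖Ag‖²]` is well defined
(`Ag ≠ 0` a.s., the integrand is bounded by `1`, entrywise integrable) and
`K = ∑_j θ_j v_j v_jᵀ` with `θ_j = E[λ_j g_j²/(λ₁g₁²+⋯+λ_qg_q²)]`. -/
theorem stmt4 (p q : ℕ) (hq : 1 ≤ q) (hp : 1 ≤ p)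
    {Ω : Type*} [MeasurableSpace Ω] (μ : Measure Ω) [IsProbabilityMeasure μ]
    (g : Ω → Fin q → ℝ) (hg : Measure.map g μ = stdGaussian q)
    (A : Matrix (Fin p) (Fin q) ℝ)
    (v : Fin q → Fin p → ℝ) (lam : Fin q → ℝ)
    (hortho : ∀ j k, (∑ i, v j i * v k i) = if j = k then (1 : ℝ) else 0)
    (hdesc : Antitone lam) (hpos : ∀ j, 0 < lam j)
    (hspec : A * Aᵀ = ∑ j, lam j • Matrix.vecMulVec (v j) (v j)) :
    μ {ω | A.mulVec (g ω) = 0} = 0 ∧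
    (∀ i i' : Fin p, ∀ᵐ ω ∂μ,
      |A.mulVec (g ω) i * A.mulVec (g ω) i' / (∑ k, A.mulVec (g ω) k ^ 2)| ≤ 1) ∧
    (∀ i i' : Fin p, Integrable
      (fun ω => A.mulVec (g ω) i * A.mulVec (g ω) i' / (∑ k, A.mulVec (g ω) k ^ 2)) μ) ∧
    (Matrix.of (fun i i' : Fin p =>
        ∫ ω, A.mulVec (g ω) i * A.mulVec (g ω) i' / (∑ k, A.mulVec (g ω) k ^ 2) ∂μ)
      = ∑ j, (∫ ω, lam j * g ω j ^ 2 / (∑ k, lam k * g ω k ^ 2) ∂μ) •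
          Matrix.vecMulVec (v j) (v j)) :=
  stmt4_general p q hq μ g hg A v lam hortho hpos hspec
end

section
/- Let L ∈ ℝ^{p×m} have rank m and let Σ_ε ∈ ℝ^{p×p} be symmetric positive definite, and set Σ_y := LLᵀ + Σ_ε. Then the matrix I_m − Lᵀ Σ_y^{-1} L is symmetric positive semidefinite and its spectral (operator) norm satisfies ‖I_m − Lᵀ Σ_y^{-1} L‖ ≤ λ_max(Σ_ε) / (λ_max(Σ_ε) + λ_min(LᵀL)), where λ_max and λ_min denote the largest and smallest eigenvalues. -/
/-!
By the Woodbury identity, `I - Lᵀ (L Lᵀ + Σ_ε)⁻¹ L = (I + Lᵀ Σ_ε⁻¹ L)⁻¹`, the inverse of a positive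
definite matrix. In the Loewner order `Σ_ε⁻¹ ≥ λ_max(Σ_ε)⁻¹ I` and `Lᵀ L ≥ λ_min(Lᵀ L) I`, so
`I + Lᵀ Σ_ε⁻¹ L ≥ a I` with `a = 1 + λ_min(Lᵀ L) / λ_max(Σ_ε)`. A matrix `N ≥ a I` satisfies
`a ‖x‖² ≤ ⟪N x, x⟫ ≤ ‖N x‖ ‖x‖`, so `‖N⁻¹‖ ≤ a⁻¹ = λ_max(Σ_ε) / (λ_max(Σ_ε) + λ_min(Lᵀ L))`.
-/

open Matrix

/-- Spectral (operator) norm of a real matrix, as the norm of the induced linear map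
between Euclidean spaces. -/
noncomputable def specNorm {k l : ℕ} (M : Matrix (Fin k) (Fin l) ℝ) : ℝ :=
  ‖LinearMap.toContinuousLinearMap (Matrix.toEuclideanLin M)‖

open scoped MatrixOrder

lemma Matrix.one_sub_mul_inv_add_mul_eq_inv {α m p : Type*} [CommRing α] [Fintype m]
    [DecidableEq m] [Fintype p] [DecidableEq p] (L : Matrix p m α) (R : Matrix m p α)
    {S : Matrix p p α} (hS : IsUnit S) (hLRS : IsUnit (L * R + S)) :
    1 - R * (L * R + S)⁻¹ * L = (1 + R * S⁻¹ * L)⁻¹ := by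
  have hSS : S⁻¹⁻¹ = S := nonsing_inv_nonsing_inv S ((isUnit_iff_isUnit_det S).1 hS)
  have hWoodbury := add_mul_mul_inv_eq_sub 1 R S⁻¹ L isUnit_one ((isUnit_nonsing_inv_iff).2 hS)
    (by rwa [hSS, inv_one, Matrix.mul_one, add_comm])
  rw [hWoodbury, hSS, inv_one, Matrix.mul_one, Matrix.one_mul, Matrix.mul_one, add_comm]

lemma LinearMap.mul_norm_le_norm_of_coercive {E : Type*} [NormedAddCommGroup E]
    [InnerProductSpace ℝ E] {T : E →ₗ[ℝ] E} {a : ℝ} (h : ∀ x, a * ‖x‖ ^ 2 ≤ inner ℝ (T x) x)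
    (x : E) : a * ‖x‖ ≤ ‖T x‖ := by
  rcases (norm_nonneg x).eq_or_lt with hx | hx
  · rw [← hx, mul_zero]
    exact norm_nonneg _
  · refine le_of_mul_le_mul_right ?_ hx
    calc a * ‖x‖ * ‖x‖ = a * ‖x‖ ^ 2 := by ring
      _ ≤ inner ℝ (T x) x := h x
      _ ≤ ‖T x‖ * ‖x‖ := real_inner_le_norm _ _

section Loewner

variable {n p m : Type*} [Fintype n] [DecidableEq n] [Fintype p] [DecidableEq p] [Fintype m]
  [DecidableEq m]

lemma Matrix.IsHermitian.smul_one_le_of_le_eigenvalues {A : Matrix n n ℝ} (hA : A.IsHermitian)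
    {c : ℝ} (h : ∀ i, c ≤ hA.eigenvalues i) : c • 1 ≤ A := by
  rw [← Algebra.algebraMap_eq_smul_one, algebraMap_le_iff_le_spectrum hA.isSelfAdjoint,
    hA.spectrum_real_eq_range_eigenvalues]
  rintro _ ⟨i, rfl⟩
  exact h i

lemma Matrix.PosDef.inv_smul_one_le_inv {A : Matrix n n ℝ} (hA : A.PosDef)
    {c : ℝ} (h : ∀ i, hA.1.eigenvalues i ≤ c) : c⁻¹ • 1 ≤ A⁻¹ := by
  have hspec : spectrum ℝ A⁻¹ = (spectrum ℝ A)⁻¹ := by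
    obtain ⟨u, hu⟩ := hA.isUnit
    rw [← hu, ← coe_units_inv, spectrum.map_inv]
  rw [← Algebra.algebraMap_eq_smul_one, algebraMap_le_iff_le_spectrum hA.inv.1.isSelfAdjoint,
    hspec, hA.1.spectrum_real_eq_range_eigenvalues]
  rintro x ⟨i, hi⟩
  rw [← inv_inv x, ← hi]
  exact inv_anti₀ (hA.eigenvalues_pos i) (h i)

lemma Matrix.smul_one_le_transpose_mul_inv_mul {S : Matrix p p ℝ} (hS : S.PosDef)
    {L : Matrix p m ℝ} {c l : ℝ} (hc : 0 ≤ c) (hSc : ∀ i, hS.1.eigenvalues i ≤ c)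
    (hl : l • 1 ≤ Lᵀ * L) : (c⁻¹ * l) • 1 ≤ Lᵀ * S⁻¹ * L := by
  have hconj := (le_iff.1 (hS.inv_smul_one_le_inv hSc)).conjTranspose_mul_mul_same L
  rw [conjTranspose_eq_transpose_of_trivial, Matrix.mul_sub, Matrix.sub_mul] at hconj
  have hscaled := (le_iff.1 hl).smul (inv_nonneg.2 hc)
  rw [smul_sub] at hscaled
  calc (c⁻¹ * l) • (1 : Matrix m m ℝ) = c⁻¹ • l • 1 := mul_smul _ _ _
    _ ≤ c⁻¹ • (Lᵀ * L) := le_iff.2 hscaled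
    _ = Lᵀ * (c⁻¹ • (1 : Matrix p p ℝ)) * L := by simp
    _ ≤ Lᵀ * S⁻¹ * L := le_iff.2 hconj

end Loewner

lemma specNorm_inv_le {k : ℕ} {A : Matrix (Fin k) (Fin k) ℝ} {a : ℝ} (ha : 0 < a)
    (h : a • 1 ≤ A) : specNorm A⁻¹ ≤ a⁻¹ := by
  have hA : A.PosDef := by
    simpa only [add_sub_cancel] using (PosDef.one.smul ha).add_posSemidef h
  have hcoercive : ∀ x, a * ‖x‖ ^ 2 ≤ inner ℝ (toEuclideanLin A x) x := by
    intro x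
    have := ((isPositive_toEuclideanLin_iff).2 h).re_inner_nonneg_left x
    simpa [inner_sub_left, real_inner_smul_left, real_inner_self_eq_norm_sq] using this
  refine ContinuousLinearMap.opNorm_le_bound _ (inv_nonneg.2 ha.le) fun v => ?_
  rw [LinearMap.coe_toContinuousLinearMap', le_inv_mul_iff₀ ha]
  have hv : toEuclideanLin A (toEuclideanLin A⁻¹ v) = v := by
    rw [← LinearMap.comp_apply, ← toLpLin_mul_same,
      mul_nonsing_inv _ ((isUnit_iff_isUnit_det A).1 hA.isUnit), toLpLin_one, LinearMap.id_apply]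
  simpa only [hv] using LinearMap.mul_norm_le_norm_of_coercive hcoercive (toEuclideanLin A⁻¹ v)

theorem stmt11_general (p m : ℕ) (hp : 1 ≤ p)
    (L : Matrix (Fin p) (Fin m) ℝ)
    (Se : Matrix (Fin p) (Fin p) ℝ) (hSe : Se.PosDef)
    (hLL : (Lᵀ * L).IsHermitian) :
    ((1 : Matrix (Fin m) (Fin m) ℝ) - Lᵀ * (L * Lᵀ + Se)⁻¹ * L).PosSemidef ∧
    specNorm ((1 : Matrix (Fin m) (Fin m) ℝ) - Lᵀ * (L * Lᵀ + Se)⁻¹ * L) ≤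
      (⨆ i, hSe.1.eigenvalues i) / ((⨆ i, hSe.1.eigenvalues i) + ⨅ i, hLL.eigenvalues i) := by
  set c := ⨆ i, hSe.1.eigenvalues i
  set l := ⨅ i, hLL.eigenvalues i
  have hSc : ∀ i, hSe.1.eigenvalues i ≤ c := le_ciSup (Finite.bddAbove_range _)
  have hc : 0 < c := (hSe.eigenvalues_pos ⟨0, hp⟩).trans_le (hSc _)
  have hG : (Lᵀ * L).PosSemidef := by
    simpa only [conjTranspose_eq_transpose_of_trivial] using posSemidef_conjTranspose_mul_self L
  have hl : 0 ≤ l := Real.iInf_nonneg hG.eigenvalues_nonneg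
  have hN : (1 + c⁻¹ * l) • 1 ≤ 1 + Lᵀ * Se⁻¹ * L := by
    rw [add_smul, one_smul]
    exact add_le_add_right (smul_one_le_transpose_mul_inv_mul hSe hc.le hSc
      (hLL.smul_one_le_of_le_eigenvalues (ciInf_le (Finite.bddBelow_range _)))) _
  have hSy : (L * Lᵀ + Se).PosDef := by
    simpa only [conjTranspose_eq_transpose_of_trivial] using
      PosDef.posSemidef_add (posSemidef_self_mul_conjTranspose L) hSe
  rw [one_sub_mul_inv_add_mul_eq_inv L Lᵀ hSe.isUnit hSy.isUnit]
  refine ⟨(PosDef.one.add_posSemidef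
    (hSe.inv.posSemidef.conjTranspose_mul_mul_same L)).inv.posSemidef, ?_⟩
  convert specNorm_inv_le (by positivity) hN using 1
  field_simp

/-- If `L ∈ ℝ^{p×m}` has rank `m` and `Σ_ε` is symmetric positive definite, then with
`Σ_y := LLᵀ + Σ_ε`, the matrix `I_m − LᵀΣ_y⁻¹L` is symmetric positive semidefinite and
its spectral norm is at most `λ_max(Σ_ε)/(λ_max(Σ_ε) + λ_min(LᵀL))`. -/
theorem stmt11 (p m : ℕ) (hm : 1 ≤ m) (hp : 1 ≤ p)
    (L : Matrix (Fin p) (Fin m) ℝ) (hrank : L.rank = m)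
    (Se : Matrix (Fin p) (Fin p) ℝ) (hSe : Se.PosDef)
    (hLL : (Lᵀ * L).IsHermitian) :
    ((1 : Matrix (Fin m) (Fin m) ℝ) - Lᵀ * (L * Lᵀ + Se)⁻¹ * L).PosSemidef ∧
    specNorm ((1 : Matrix (Fin m) (Fin m) ℝ) - Lᵀ * (L * Lᵀ + Se)⁻¹ * L) ≤
      (⨆ i, hSe.1.eigenvalues i) / ((⨆ i, hSe.1.eigenvalues i) + ⨅ i, hLL.eigenvalues i) :=
  stmt11_general p m hp L Se hSe hLL
end

section
/- Fix m ≥ 1 and constants c₁ ≥ c₂ > 0. For each p ≥ m, let L_p ∈ ℝ^{p×m} and let Σ_{ε,p} ∈ ℝ^{p×p} be symmetric with c₂ ≤ λ_min(Σ_{ε,p}) ≤ λ_max(Σ_{ε,p}) ≤ c₁ (Assumption C), and assume L_pᵀL_p/p → V as p → ∞ for some positive definite V ∈ ℝ^{m×m} with c₂ ≤ λ_m(V) ≤ λ₁(V) ≤ c₁ (Assumption B). Set Σ_{y,p} := L_pL_pᵀ + Σ_{ε,p}. Then both ‖I_m − L_pᵀ Σ_{y,p}^{-1} L_p‖_F²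 = O(p^{-2}) and ‖L_pᵀ Σ_{y,p}^{-2} L_p‖_F² = O(p^{-2}) as p → ∞; that is, there exist C > 0 and p₀ such that for all p ≥ p₀, ‖I_m − L_pᵀ Σ_{y,p}^{-1} L_p‖_F² ≤ C/p² and ‖L_pᵀ Σ_{y,p}^{-2} L_p‖_F² ≤ C/p². -/
/-!
Put `B = Lᵀ Σ_ε⁻¹ L`. The push-through (Woodbury) identities give
`I - Lᵀ Σ_y⁻¹ L = (I + B)⁻¹` and `Σ_y⁻¹ L = Σ_ε⁻¹ L (I + B)⁻¹`.
Assumption B makes `Lᵀ L ≥ (c₂ / 2) p I` for large `p`, and `Σ_ε ≤ c₁ I` gives `Σ_ε⁻¹ ≥ c₁⁻¹ I`,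
so `B ≥ (c₂ / (2 c₁)) p I` and `(I + B)⁻¹` has operator norm `O(1 / p)`: the first matrix has
squared Frobenius norm `O(m / p²)`. Since `‖L‖² = O(p)`, `X = Σ_y⁻¹ L` has squared operator norm
`O(1 / p)`, hence `‖X‖_F² = O(m / p)`, and `Lᵀ Σ_y⁻² L = Xᵀ X` has `‖Xᵀ X‖_F² ≤ ‖X‖_F⁴ = O(1 / p²)`.
-/

open Matrix Filter Topology

def frobSq {a b : ℕ} (M : Matrix (Fin a) (Fin b) ℝ) : ℝ := ∑ i, ∑ j, M i j ^ 2

section QuadraticForm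

variable {n : Type*} [Fintype n]

lemma sum_sq_eq_dotProduct_self (x : n → ℝ) : ∑ i, x i ^ 2 = x ⬝ᵥ x := by
  simp only [dotProduct, sq]

lemma dotProduct_self_nonneg (x : n → ℝ) : 0 ≤ x ⬝ᵥ x :=
  Fintype.sum_nonneg fun i => mul_self_nonneg (x i)

lemma dotProduct_sq_le (x y : n → ℝ) : (x ⬝ᵥ y) ^ 2 ≤ (x ⬝ᵥ x) * (y ⬝ᵥ y) := by
  simpa only [dotProduct, sq] using Finset.sum_mul_sq_le_sq_mul_sq Finset.univ x y

lemma dotProduct_mulVec_transpose_mul_self {k : Type*} [Fintype k] (L : Matrix k n ℝ)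
    (x : n → ℝ) :
    x ⬝ᵥ (Lᵀ * L) *ᵥ x = (L *ᵥ x) ⬝ᵥ (L *ᵥ x) := by
  rw [← mulVec_mulVec, dotProduct_mulVec, ← mulVec_transpose, transpose_transpose]

lemma sq_mul_dotProduct_self_le_of_coercive {A : Matrix n n ℝ} {a : ℝ} (ha : 0 < a)
    (hA : ∀ x, a * (x ⬝ᵥ x) ≤ x ⬝ᵥ A *ᵥ x) (x : n → ℝ) :
    a ^ 2 * (x ⬝ᵥ x) ≤ (A *ᵥ x) ⬝ᵥ (A *ᵥ x) := by
  have hcs := dotProduct_sq_le x (A *ᵥ x)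
  rcases (dotProduct_self_nonneg x).eq_or_lt with h0 | hpos
  · rw [← h0, mul_zero]; exact dotProduct_self_nonneg _
  · have := (pow_le_pow_left₀ (by positivity) (hA x) 2).trans hcs
    nlinarith

lemma mulVec_mul_dotProduct_le {k l : Type*} [Fintype k] [Fintype l] {A : Matrix k l ℝ}
    {B : Matrix l n ℝ} {K K' : ℝ} (hK : 0 ≤ K) (hA : ∀ x, (A *ᵥ x) ⬝ᵥ (A *ᵥ x) ≤ K * (x ⬝ᵥ x))
    (hB : ∀ x, (B *ᵥ x) ⬝ᵥ (B *ᵥ x) ≤ K' * (x ⬝ᵥ x)) (x : n → ℝ) :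
    ((A * B) *ᵥ x) ⬝ᵥ ((A * B) *ᵥ x) ≤ K * K' * (x ⬝ᵥ x) := by
  rw [← mulVec_mulVec, mul_assoc]
  exact (hA _).trans (mul_le_mul_of_nonneg_left (hB x) hK)

variable [DecidableEq n]

lemma isUnit_det_of_coercive {A : Matrix n n ℝ} {a : ℝ} (ha : 0 < a)
    (hA : ∀ x, a * (x ⬝ᵥ x) ≤ x ⬝ᵥ A *ᵥ x) : IsUnit A.det := by
  refine (isUnit_iff_isUnit_det A).mp <|
    mulVec_injective_iff_isUnit.mp fun u v huv => sub_eq_zero.mp ?_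
  have h := sq_mul_dotProduct_self_le_of_coercive ha hA (u - v)
  rw [mulVec_sub, huv, sub_self, zero_dotProduct] at h
  exact dotProduct_self_eq_zero.mp <|
    le_antisymm (nonpos_of_mul_nonpos_right h (by positivity)) (dotProduct_self_nonneg _)

lemma inv_mulVec_dotProduct_le_of_coercive {A : Matrix n n ℝ} {a : ℝ} (ha : 0 < a)
    (hA : ∀ x, a * (x ⬝ᵥ x) ≤ x ⬝ᵥ A *ᵥ x) (y : n → ℝ) :
    (A⁻¹ *ᵥ y) ⬝ᵥ (A⁻¹ *ᵥ y) ≤ (a ^ 2)⁻¹ * (y ⬝ᵥ y) := by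
  have hdet := isUnit_det_of_coercive ha hA
  have h := sq_mul_dotProduct_self_le_of_coercive ha hA (A⁻¹ *ᵥ y)
  rw [mulVec_mulVec, mul_nonsing_inv _ hdet, one_mulVec] at h
  rw [le_inv_mul_iff₀ (by positivity)]
  exact h

lemma inv_mul_dotProduct_self_le_inv_mulVec {S : Matrix n n ℝ} (hS : S.IsSymm) {a b : ℝ}
    (ha : 0 < a) (hb : 0 < b) (hlow : ∀ x, a * (x ⬝ᵥ x) ≤ x ⬝ᵥ S *ᵥ x)
    (hup : ∀ x, x ⬝ᵥ S *ᵥ x ≤ b * (x ⬝ᵥ x)) (z : n → ℝ) :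
    b⁻¹ * (z ⬝ᵥ z) ≤ z ⬝ᵥ S⁻¹ *ᵥ z := by
  have hdet := isUnit_det_of_coercive ha hlow
  set y := S⁻¹ *ᵥ z
  have hSy : S *ᵥ y = z := by rw [mulVec_mulVec, mul_nonsing_inv _ hdet, one_mulVec]
  have hsymm : y ⬝ᵥ S *ᵥ z = z ⬝ᵥ z := by
    rw [dotProduct_mulVec, ← mulVec_transpose, hS.eq, hSy, dotProduct_comm]
  -- expand `0 ≤ (y - b⁻¹ z) ⬝ᵥ S *ᵥ (y - b⁻¹ z)`, where `S y = z`
  have h := (hlow (y - b⁻¹ • z)).trans' (mul_nonneg ha.le (dotProduct_self_nonneg _))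
  have hz := hup z
  simp only [mulVec_sub, mulVec_smul, dotProduct_sub, sub_dotProduct, dotProduct_smul,
    smul_dotProduct, smul_eq_mul, hSy, hsymm] at h
  have hz' : b⁻¹ * (z ⬝ᵥ S *ᵥ z) ≤ z ⬝ᵥ z := (inv_mul_le_iff₀ hb).mpr hz
  have := mul_le_mul_of_nonneg_left hz' (inv_nonneg.mpr hb.le)
  rw [dotProduct_comm z y]
  linarith

lemma Matrix.IsHermitian.dotProduct_mulVec_bounds {A : Matrix n n ℝ} (hA : A.IsHermitian)
    {a b : ℝ} (ha : ∀ i, a ≤ hA.eigenvalues i) (hb : ∀ i, hA.eigenvalues i ≤ b) (x : n → ℝ) :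
    a * (x ⬝ᵥ x) ≤ x ⬝ᵥ A *ᵥ x ∧ x ⬝ᵥ A *ᵥ x ≤ b * (x ⬝ᵥ x) := by
  set U : Matrix n n ℝ := (hA.eigenvectorUnitary : Matrix n n ℝ)
  set y := Uᵀ *ᵥ x
  have hUU : U * Uᵀ = 1 := Unitary.coe_mul_star_self hA.eigenvectorUnitary
  have hnorm : x ⬝ᵥ x = ∑ i, y i * y i := by
    rw [← dotProduct, ← dotProduct_mulVec_transpose_mul_self, transpose_transpose, hUU,
      one_mulVec]
  have hform : x ⬝ᵥ A *ᵥ x = ∑ i, hA.eigenvalues i * (y i * y i) := by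
    conv_lhs => rw [hA.spectral_theorem, Unitary.conjStarAlgAut_apply]
    rw [← mulVec_mulVec, ← mulVec_mulVec, dotProduct_mulVec, ← mulVec_transpose]
    simp only [dotProduct, mulVec_diagonal, star_eq_conjTranspose,
      conjTranspose_eq_transpose_of_trivial, Function.comp_apply, RCLike.ofReal_real_eq_id, id]
    exact Finset.sum_congr rfl fun i _ => by ring
  rw [hnorm, hform, Finset.mul_sum, Finset.mul_sum]
  exact ⟨Finset.sum_le_sum fun i _ => mul_le_mul_of_nonneg_right (ha i) (mul_self_nonneg _),
    Finset.sum_le_sum fun i _ => mul_le_mul_of_nonneg_right (hb i) (mul_self_nonneg _)⟩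

end QuadraticForm

section Perturbation

variable {n : Type*} [Fintype n]

lemma abs_dotProduct_mulVec_le {M : Matrix n n ℝ} {ε : ℝ} (hε : 0 ≤ ε)
    (hM : ∀ i j, |M i j| ≤ ε) (x : n → ℝ) : |x ⬝ᵥ M *ᵥ x| ≤ ε * Fintype.card n * (x ⬝ᵥ x) := by
  have hsum : x ⬝ᵥ M *ᵥ x = ∑ i, ∑ j, M i j * (x i * x j) := by
    simp only [dotProduct, mulVec, Finset.mul_sum]
    exact Finset.sum_congr rfl fun i _ => Finset.sum_congr rfl fun j _ => by ring
  calc |x ⬝ᵥ M *ᵥ x| ≤ ∑ i, ∑ j, ε * (|x i| * |x j|) := by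
        rw [hsum]
        refine (Finset.abs_sum_le_sum_abs _ _).trans (Finset.sum_le_sum fun i _ => ?_)
        refine (Finset.abs_sum_le_sum_abs _ _).trans (Finset.sum_le_sum fun j _ => ?_)
        rw [abs_mul, abs_mul]
        exact mul_le_mul_of_nonneg_right (hM i j) (by positivity)
    _ = ε * (∑ i, |x i|) ^ 2 := by
        rw [sq, Finset.sum_mul_sum, Finset.mul_sum]
        simp only [Finset.mul_sum]
    _ ≤ ε * (Fintype.card n * (x ⬝ᵥ x)) := by
        gcongr
        simpa [dotProduct, sq_abs, sq] using
          sq_sum_le_card_mul_sum_sq (s := Finset.univ) (f := fun i => |x i|)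
    _ = ε * Fintype.card n * (x ⬝ᵥ x) := by ring

lemma eventually_dotProduct_mulVec_bounds {ι : Type*} {l : Filter ι} {M : ι → Matrix n n ℝ}
    {V : Matrix n n ℝ} (hM : ∀ i j, Tendsto (fun k => M k i j) l (𝓝 (V i j))) {a b δ : ℝ}
    (hV : ∀ x, a * (x ⬝ᵥ x) ≤ x ⬝ᵥ V *ᵥ x ∧ x ⬝ᵥ V *ᵥ x ≤ b * (x ⬝ᵥ x)) (hδ : 0 < δ) :
    ∀ᶠ k in l, ∀ x, (a - δ) * (x ⬝ᵥ x) ≤ x ⬝ᵥ M k *ᵥ x ∧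
      x ⬝ᵥ M k *ᵥ x ≤ (b + δ) * (x ⬝ᵥ x) := by
  set ε := δ / (Fintype.card n + 1)
  have hε : 0 < ε := by positivity
  have hεδ : ε * Fintype.card n ≤ δ := by
    rw [div_mul_eq_mul_div, div_le_iff₀ (by positivity)]
    nlinarith
  have hclose : ∀ᶠ k in l, ∀ i j, |(M k - V) i j| ≤ ε := by
    simp only [eventually_all, Matrix.sub_apply, ← Real.dist_eq]
    exact fun i j => (Metric.tendsto_nhds.mp (hM i j) ε hε).mono fun k hk => hk.le
  filter_upwards [hclose] with k hk x
  have hdiff := abs_le.mp (abs_dotProduct_mulVec_le hε.le hk x)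
  rw [sub_mulVec, dotProduct_sub] at hdiff
  have hδx := mul_le_mul_of_nonneg_right hεδ (dotProduct_self_nonneg x)
  constructor <;> nlinarith [hV x]

end Perturbation

section Frobenius

variable {a b c : ℕ}

lemma frobSq_transpose (M : Matrix (Fin a) (Fin b) ℝ) : frobSq Mᵀ = frobSq M :=
  Finset.sum_comm

lemma frobSq_nonneg (M : Matrix (Fin a) (Fin b) ℝ) : 0 ≤ frobSq M := by
  unfold frobSq; positivity

lemma frobSq_eq_sum_mulVec_single (M : Matrix (Fin a) (Fin b) ℝ) :
    frobSq M = ∑ j, (M *ᵥ Pi.single j 1) ⬝ᵥ (M *ᵥ Pi.single j 1) := by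
  simp only [mulVec_single_one, ← sum_sq_eq_dotProduct_self, ← frobSq_transpose M]
  rfl

lemma frobSq_le_of_mulVec_le {M : Matrix (Fin a) (Fin b) ℝ} {K : ℝ}
    (hM : ∀ x, (M *ᵥ x) ⬝ᵥ (M *ᵥ x) ≤ K * (x ⬝ᵥ x)) : frobSq M ≤ b * K := by
  rw [frobSq_eq_sum_mulVec_single]
  calc _ ≤ ∑ _j : Fin b, K := Finset.sum_le_sum fun j _ => by
        simpa [← sum_sq_eq_dotProduct_self, Pi.single_apply] using hM (Pi.single j 1)
    _ = b * K := by simp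

lemma frobSq_mul_le (A : Matrix (Fin a) (Fin b) ℝ) (B : Matrix (Fin b) (Fin c) ℝ) :
    frobSq (A * B) ≤ frobSq A * frobSq B := by
  rw [← frobSq_transpose B, frobSq, frobSq, frobSq, Finset.sum_mul_sum]
  refine Finset.sum_le_sum fun i _ => Finset.sum_le_sum fun j _ => ?_
  simpa only [mul_apply, transpose_apply] using
    Finset.sum_mul_sq_le_sq_mul_sq Finset.univ (A i) (Bᵀ j)

end Frobenius

section Woodbury

variable {α m n : Type*} [CommRing α] [Fintype m] [Fintype n] [DecidableEq m] [DecidableEq n]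

lemma mul_add_inv_mul_eq {S : Matrix n n α} (U : Matrix n m α) (W : Matrix m n α)
    (hS : IsUnit S.det) (hB : IsUnit (1 + W * S⁻¹ * U).det) :
    (U * W + S)⁻¹ * U = S⁻¹ * U * (1 + W * S⁻¹ * U)⁻¹ := by
  have hdet : IsUnit (U * W + S).det := by
    rw [add_comm, det_add_mul U W hS]; exact hS.mul hB
  have hmul : (U * W + S) * (S⁻¹ * U * (1 + W * S⁻¹ * U)⁻¹) = U := by
    calc (U * W + S) * (S⁻¹ * U * (1 + W * S⁻¹ * U)⁻¹)
        = U * ((1 + W * S⁻¹ * U) * (1 + W * S⁻¹ * U)⁻¹) := by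
          simp only [Matrix.add_mul, Matrix.mul_add, Matrix.one_mul, Matrix.mul_assoc,
            mul_nonsing_inv_cancel_left _ _ hS]
          abel
      _ = U := by rw [mul_nonsing_inv _ hB, Matrix.mul_one]
  calc (U * W + S)⁻¹ * U
      = (U * W + S)⁻¹ * ((U * W + S) * (S⁻¹ * U * (1 + W * S⁻¹ * U)⁻¹)) := by rw [hmul]
    _ = _ := nonsing_inv_mul_cancel_left _ _ hdet

lemma one_sub_mul_mul_add_inv_mul_eq {S : Matrix n n α} (U : Matrix n m α) (W : Matrix m n α)
    (hS : IsUnit S.det) (hB : IsUnit (1 + W * S⁻¹ * U).det) :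
    1 - W * (U * W + S)⁻¹ * U = (1 + W * S⁻¹ * U)⁻¹ := by
  have h := mul_nonsing_inv _ hB
  rw [Matrix.mul_assoc, mul_add_inv_mul_eq U W hS hB, ← Matrix.mul_assoc, ← Matrix.mul_assoc,
    sub_eq_iff_eq_add]
  rw [add_mul, one_mul] at h
  exact h.symm

end Woodbury

lemma one_add_transpose_mul_inv_mul_coercive {k n : Type*} [Fintype k] [Fintype n]
    [DecidableEq k] [DecidableEq n] {S : Matrix k k ℝ} {L : Matrix k n ℝ} {c₁ c₂ α : ℝ}
    (hS : S.IsSymm) (hc₂ : 0 < c₂) (hc₁ : 0 < c₁)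
    (hSb : ∀ x, c₂ * (x ⬝ᵥ x) ≤ x ⬝ᵥ S *ᵥ x ∧ x ⬝ᵥ S *ᵥ x ≤ c₁ * (x ⬝ᵥ x))
    (hL : ∀ x, α * (x ⬝ᵥ x) ≤ (L *ᵥ x) ⬝ᵥ (L *ᵥ x)) (x : n → ℝ) :
    c₁⁻¹ * α * (x ⬝ᵥ x) ≤ x ⬝ᵥ (1 + Lᵀ * S⁻¹ * L) *ᵥ x := by
  have hinv := inv_mul_dotProduct_self_le_inv_mulVec hS hc₂ hc₁ (fun x => (hSb x).1)
    (fun x => (hSb x).2) (L *ᵥ x)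
  have hquad : x ⬝ᵥ (Lᵀ * S⁻¹ * L) *ᵥ x = (L *ᵥ x) ⬝ᵥ S⁻¹ *ᵥ (L *ᵥ x) := by
    rw [← mulVec_mulVec, ← mulVec_mulVec, dotProduct_mulVec, ← mulVec_transpose,
      transpose_transpose]
  rw [add_mulVec, one_mulVec, dotProduct_add, hquad, mul_assoc]
  nlinarith [mul_le_mul_of_nonneg_left (hL x) (inv_nonneg.mpr hc₁.le), dotProduct_self_nonneg x]

section FrobeniusBounds

variable {p m : ℕ} {S : Matrix (Fin p) (Fin p) ℝ} {L : Matrix (Fin p) (Fin m) ℝ} {c₁ c₂ α : ℝ}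

lemma frobSq_one_sub_transpose_mul_inv_mul_le (hS : S.IsSymm) (hc₂ : 0 < c₂) (hc₁ : 0 < c₁)
    (hSb : ∀ x, c₂ * (x ⬝ᵥ x) ≤ x ⬝ᵥ S *ᵥ x ∧ x ⬝ᵥ S *ᵥ x ≤ c₁ * (x ⬝ᵥ x))
    (hα : 0 < α) (hL : ∀ x, α * (x ⬝ᵥ x) ≤ (L *ᵥ x) ⬝ᵥ (L *ᵥ x)) :
    frobSq (1 - Lᵀ * (L * Lᵀ + S)⁻¹ * L) ≤ m * ((c₁⁻¹ * α) ^ 2)⁻¹ := by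
  have hB := one_add_transpose_mul_inv_mul_coercive hS hc₂ hc₁ hSb hL
  have hcα : 0 < c₁⁻¹ * α := by positivity
  rw [one_sub_mul_mul_add_inv_mul_eq L Lᵀ (isUnit_det_of_coercive hc₂ fun x => (hSb x).1)
    (isUnit_det_of_coercive hcα hB)]
  exact frobSq_le_of_mulVec_le (inv_mulVec_dotProduct_le_of_coercive hcα hB)

lemma frobSq_transpose_mul_inv_sq_mul_le (hS : S.IsSymm) (hc₂ : 0 < c₂) (hc₁ : 0 < c₁)
    (hSb : ∀ x, c₂ * (x ⬝ᵥ x) ≤ x ⬝ᵥ S *ᵥ x ∧ x ⬝ᵥ S *ᵥ x ≤ c₁ * (x ⬝ᵥ x))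
    (hα : 0 < α) {α' : ℝ} (hα' : 0 ≤ α')
    (hL : ∀ x, α * (x ⬝ᵥ x) ≤ (L *ᵥ x) ⬝ᵥ (L *ᵥ x) ∧ (L *ᵥ x) ⬝ᵥ (L *ᵥ x) ≤ α' * (x ⬝ᵥ x)) :
    frobSq (Lᵀ * ((L * Lᵀ + S)⁻¹ * (L * Lᵀ + S)⁻¹) * L) ≤
      (m * ((c₂ ^ 2)⁻¹ * α' * ((c₁⁻¹ * α) ^ 2)⁻¹)) ^ 2 := by
  have hB := one_add_transpose_mul_inv_mul_coercive hS hc₂ hc₁ hSb fun x => (hL x).1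
  have hcα : 0 < c₁⁻¹ * α := by positivity
  have hSdet := isUnit_det_of_coercive hc₂ fun x => (hSb x).1
  have hpush := mul_add_inv_mul_eq L Lᵀ hSdet (isUnit_det_of_coercive hcα hB)
  have hsymm : ((L * Lᵀ + S)⁻¹)ᵀ = (L * Lᵀ + S)⁻¹ := by
    rw [transpose_nonsing_inv, transpose_add, transpose_mul, transpose_transpose, hS.eq]
  have hgram : Lᵀ * ((L * Lᵀ + S)⁻¹ * (L * Lᵀ + S)⁻¹) * L =
      ((L * Lᵀ + S)⁻¹ * L)ᵀ * ((L * Lᵀ + S)⁻¹ * L) := by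
    rw [transpose_mul, hsymm, Matrix.mul_assoc, Matrix.mul_assoc, Matrix.mul_assoc]
  have hX : frobSq ((L * Lᵀ + S)⁻¹ * L) ≤ m * ((c₂ ^ 2)⁻¹ * α' * ((c₁⁻¹ * α) ^ 2)⁻¹) := by
    rw [hpush]
    refine frobSq_le_of_mulVec_le (mulVec_mul_dotProduct_le (by positivity)
      (mulVec_mul_dotProduct_le (by positivity)
        (inv_mulVec_dotProduct_le_of_coercive hc₂ fun x => (hSb x).1) fun x => (hL x).2)
      (inv_mulVec_dotProduct_le_of_coercive hcα hB))
  rw [hgram]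
  calc _ ≤ frobSq ((L * Lᵀ + S)⁻¹ * L) ^ 2 :=
        (frobSq_mul_le _ _).trans_eq (by rw [frobSq_transpose, sq])
    _ ≤ _ := pow_le_pow_left₀ (frobSq_nonneg _) hX 2

end FrobeniusBounds

lemma eventually_mulVec_bounds_of_tendsto_gram_div {n : Type*} [Fintype n]
    (L : ∀ p : ℕ, Matrix (Fin p) n ℝ) {V : Matrix n n ℝ}
    (hL : ∀ i j, Tendsto (fun p : ℕ => ((L p)ᵀ * L p) i j / p) atTop (𝓝 (V i j))) {a b δ : ℝ}
    (hV : ∀ x, a * (x ⬝ᵥ x) ≤ x ⬝ᵥ V *ᵥ x ∧ x ⬝ᵥ V *ᵥ x ≤ b * (x ⬝ᵥ x)) (hδ : 0 < δ) :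
    ∀ᶠ p : ℕ in atTop, 0 < p ∧ ∀ x, (a - δ) * p * (x ⬝ᵥ x) ≤ (L p *ᵥ x) ⬝ᵥ (L p *ᵥ x) ∧
      (L p *ᵥ x) ⬝ᵥ (L p *ᵥ x) ≤ (b + δ) * p * (x ⬝ᵥ x) := by
  have hM : ∀ i j,
      Tendsto (fun p : ℕ => ((p : ℝ)⁻¹ • ((L p)ᵀ * L p)) i j) atTop (𝓝 (V i j)) := by
    simpa only [Matrix.smul_apply, smul_eq_mul, ← div_eq_inv_mul] using hL
  filter_upwards [eventually_dotProduct_mulVec_bounds hM hV hδ, eventually_gt_atTop 0]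
    with p hbounds hp
  refine ⟨hp, fun x => ?_⟩
  have hp' : (0 : ℝ) < p := Nat.cast_pos.mpr hp
  obtain ⟨hlow, hup⟩ := hbounds x
  rw [smul_mulVec, dotProduct_smul, smul_eq_mul, dotProduct_mulVec_transpose_mul_self]
    at hlow hup
  rw [le_inv_mul_iff₀ hp'] at hlow
  rw [inv_mul_le_iff₀ hp'] at hup
  exact ⟨by linarith, by linarith⟩

theorem stmt12_general (m : ℕ) (c₁ c₂ : ℝ) (hc₂ : 0 < c₂) (hc₁₂ : c₂ ≤ c₁)
    (L : ∀ p : ℕ, Matrix (Fin p) (Fin m) ℝ)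
    (Se : ∀ p : ℕ, Matrix (Fin p) (Fin p) ℝ)
    (hSym : ∀ p, (Se p).IsHermitian)
    (hC : ∀ p, ∀ x : Fin p → ℝ,
      c₂ * (∑ i, x i ^ 2) ≤ x ⬝ᵥ (Se p).mulVec x ∧
        x ⬝ᵥ (Se p).mulVec x ≤ c₁ * (∑ i, x i ^ 2))
    (V : Matrix (Fin m) (Fin m) ℝ) (hVpos : V.PosDef)
    (hVeig : ∀ i, c₂ ≤ hVpos.1.eigenvalues i ∧ hVpos.1.eigenvalues i ≤ c₁)
    (hB : ∀ i j, Tendsto (fun p : ℕ => ((L p)ᵀ * L p) i j / (p : ℝ)) atTop (𝓝 (V i j))) :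
    ∃ C : ℝ, 0 < C ∧ ∃ p₀ : ℕ, ∀ p, p₀ ≤ p →
      frobSq ((1 : Matrix (Fin m) (Fin m) ℝ) -
          (L p)ᵀ * (L p * (L p)ᵀ + Se p)⁻¹ * L p) ≤ C / (p : ℝ) ^ 2 ∧
      frobSq ((L p)ᵀ * ((L p * (L p)ᵀ + Se p)⁻¹ * (L p * (L p)ᵀ + Se p)⁻¹) * L p) ≤
        C / (p : ℝ) ^ 2 := by
  have hc₁ : 0 < c₁ := hc₂.trans_le hc₁₂
  have hV := hVpos.isHermitian.dotProduct_mulVec_bounds (fun i => (hVeig i).1)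
    (fun i => (hVeig i).2)
  obtain ⟨p₀, hp₀⟩ := eventually_atTop.mp
    (eventually_mulVec_bounds_of_tendsto_gram_div L hB hV (half_pos hc₂))
  set C₁ : ℝ := m * ((c₁⁻¹ * (c₂ / 2)) ^ 2)⁻¹
  set C₂ : ℝ := (m * ((c₂ ^ 2)⁻¹ * (c₁ + c₂ / 2) * ((c₁⁻¹ * (c₂ / 2)) ^ 2)⁻¹)) ^ 2
  -- `+ 1` keeps `C` positive when `m = 0`
  refine ⟨C₁ + C₂ + 1, by positivity, p₀, fun p hp => ?_⟩
  obtain ⟨hp_pos, hL⟩ := hp₀ p hp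
  simp only [sub_half] at hL
  have hSe : ∀ x, c₂ * (x ⬝ᵥ x) ≤ x ⬝ᵥ Se p *ᵥ x ∧ x ⬝ᵥ Se p *ᵥ x ≤ c₁ * (x ⬝ᵥ x) := by
    simpa only [sum_sq_eq_dotProduct_self] using hC p
  have hSymm := isHermitian_iff_isSymm.mp (hSym p)
  have h₁ := frobSq_one_sub_transpose_mul_inv_mul_le hSymm hc₂ hc₁ hSe (by positivity)
    fun x => (hL x).1
  have h₂ := frobSq_transpose_mul_inv_sq_mul_le hSymm hc₂ hc₁ hSe (by positivity)
    (by positivity) hL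
  have hC₁ : 0 ≤ C₁ := by positivity
  have hC₂ : 0 ≤ C₂ := by positivity
  constructor
  · calc _ ≤ _ := h₁
      _ = C₁ / p ^ 2 := by ring
      _ ≤ _ := by gcongr; linarith
  · calc _ ≤ _ := h₂
      _ = C₂ / p ^ 2 := by simp only [C₂]; field_simp
      _ ≤ _ := by gcongr; linarith

/-- Lemma S1: under Assumptions B and C, `‖I_m − LᵀΣ_y⁻¹L‖_F² = O(p⁻²)` and
`‖LᵀΣ_y⁻²L‖_F² = O(p⁻²)`, where `Σ_y = LLᵀ + Σ_ε`.  The eigenvalue bounds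
`c₂ ≤ λ_min(Σ_ε) ≤ λ_max(Σ_ε) ≤ c₁` are expressed through the quadratic form. -/
theorem stmt12 (m : ℕ) (hm : 1 ≤ m) (c₁ c₂ : ℝ) (hc₂ : 0 < c₂) (hc₁₂ : c₂ ≤ c₁)
    (L : ∀ p : ℕ, Matrix (Fin p) (Fin m) ℝ)
    (Se : ∀ p : ℕ, Matrix (Fin p) (Fin p) ℝ)
    (hSym : ∀ p, (Se p).IsHermitian)
    (hC : ∀ p, ∀ x : Fin p → ℝ,
      c₂ * (∑ i, x i ^ 2) ≤ x ⬝ᵥ (Se p).mulVec x ∧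
        x ⬝ᵥ (Se p).mulVec x ≤ c₁ * (∑ i, x i ^ 2))
    (V : Matrix (Fin m) (Fin m) ℝ) (hVpos : V.PosDef)
    (hVeig : ∀ i, c₂ ≤ hVpos.1.eigenvalues i ∧ hVpos.1.eigenvalues i ≤ c₁)
    (hB : ∀ i j, Tendsto (fun p : ℕ => ((L p)ᵀ * L p) i j / (p : ℝ)) atTop (𝓝 (V i j))) :
    ∃ C : ℝ, 0 < C ∧ ∃ p₀ : ℕ, ∀ p, p₀ ≤ p →
      frobSq ((1 : Matrix (Fin m) (Fin m) ℝ) -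
          (L p)ᵀ * (L p * (L p)ᵀ + Se p)⁻¹ * L p) ≤ C / (p : ℝ) ^ 2 ∧
      frobSq ((L p)ᵀ * ((L p * (L p)ᵀ + Se p)⁻¹ * (L p * (L p)ᵀ + Se p)⁻¹) * L p) ≤
        C / (p : ℝ) ^ 2 :=
  stmt12_general m c₁ c₂ hc₂ hc₁₂ L Se hSym hC V hVpos hVeig hB
end

section
/- Fix m ≥ 1 and constants c₁ ≥ c₂ > 0. For each p ≥ m, let L_p ∈ ℝ^{p×m} and let Σ_{ε,p} ∈ ℝ^{p×p} be symmetric with c₂ ≤ λ_min(Σ_{ε,p}) ≤ λ_max(Σ_{ε,p}) ≤ c₁ (Assumption C), and assume L_pᵀL_p/p → V as p → ∞ for some positive definite V ∈ ℝ^{m×m} with c₂ ≤ λ_m(V) ≤ λ₁(V) ≤ c₁ (Assumption B). Set Σ_{y,p} := L_pL_pᵀ + Σ_{ε,p}. Then the eigenvalues of Σ_{y,p} have a spiked structure: there exist c > 0 and p₀ such that for all p ≥ p₀, λ_j(Σ_{y,p}) ≥ c·p for every 1 ≤ j ≤ m, while c₂ ≤ λ_j(Σ_{y,p}) ≤ c₁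 for every m < j ≤ p, where λ_j denotes the j-th largest eigenvalue. -/
/-!
Courant–Fischer in one direction: if the quadratic form of a symmetric matrix is at least
`t ‖x‖²` on a subspace `W`, then at least `dim W` eigenvalues are `≥ t` (otherwise some
`x ∈ W` has no component along their eigenvectors), and dually for upper bounds.
For `Σ_y = L Lᵀ + Σ_ε` the form is `‖Lᵀ x‖² + xᵀ Σ_ε x`. It is `≥ c₂ ‖x‖²` everywhere, and
`≤ c₁ ‖x‖²` on `ker Lᵀ`, of dimension `≥ p - m`. Since `LᵀL / p → V ≥ c₂`, eventually
`LᵀL ≥ (c₂ / 2) p`, so `L` is injective and, by Cauchy–Schwarz, the form is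
`≥ (c₂ / 2) p ‖x‖²` on the `m`-dimensional range of `L`.
-/

open Matrix Filter Topology

/-- The `j`-th largest eigenvalue (descending order, counted with multiplicity)
of a Hermitian real matrix. -/
noncomputable def eigDesc {k : ℕ} {M : Matrix (Fin k) (Fin k) ℝ} (hM : M.IsHermitian)
    (j : Fin k) : ℝ :=
  (hM.eigenvalues ∘ Tuple.sort hM.eigenvalues) j.rev

open Finset

theorem Module.finrank_le_card_of_exists_apply_ne_zero {K E ι : Type*} [Field K] [AddCommGroup E]
    [Module K E] (f : E →ₗ[K] ι → K) (W : Submodule K E) (T : Finset ι)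
    (hW : ∀ x ∈ W, x ≠ 0 → ∃ i ∈ T, f x i ≠ 0) : Module.finrank K W ≤ #T := by
  let φ : W →ₗ[K] T → K := LinearMap.funLeft K K Subtype.val ∘ₗ f ∘ₗ W.subtype
  have hφ : Function.Injective φ := by
    rw [← LinearMap.ker_eq_bot, LinearMap.ker_eq_bot']
    rintro ⟨x, hx⟩ hφx
    by_contra hne
    obtain ⟨i, hi, hfx⟩ := hW x hx (by simpa using hne)
    exact hfx (congrFun hφx ⟨i, hi⟩)
  simpa using LinearMap.finrank_le_finrank_of_injective hφ

theorem Finset.sum_mul_sq_lt_mul_sum_sq {n : Type*} [Fintype n] {f y : n → ℝ} {t : ℝ}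
    (hy : y ≠ 0) (h : ∀ i, y i ≠ 0 → f i < t) : ∑ i, f i * y i ^ 2 < t * ∑ i, y i ^ 2 := by
  obtain ⟨i₀, hi₀⟩ := Function.ne_iff.1 hy
  rw [mul_sum]
  refine sum_lt_sum (fun i _ => ?_) ⟨i₀, mem_univ _, ?_⟩
  · by_cases hi : y i = 0
    · simp [hi]
    · exact mul_le_mul_of_nonneg_right (h i hi).le (sq_nonneg _)
  · exact mul_lt_mul_of_pos_right (h i₀ hi₀) (sq_pos_of_ne_zero hi₀)

namespace Matrix

variable {n k : Type*} [Fintype n] [Fintype k]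

theorem dotProduct_mulVec_mul_transpose (L : Matrix n k ℝ) (x : n → ℝ) :
    x ⬝ᵥ (L * Lᵀ) *ᵥ x = ∑ j, (Lᵀ *ᵥ x) j ^ 2 := by
  rw [← mulVec_mulVec, dotProduct_mulVec, ← mulVec_transpose]
  simp [dotProduct, sq]

theorem dotProduct_mulVec_mul_transpose_add (L : Matrix n k ℝ) (S : Matrix n n ℝ) (x : n → ℝ) :
    x ⬝ᵥ (L * Lᵀ + S) *ᵥ x = ∑ j, (Lᵀ *ᵥ x) j ^ 2 + x ⬝ᵥ S *ᵥ x := by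
  rw [add_mulVec, dotProduct_add, dotProduct_mulVec_mul_transpose]

theorem sum_sq_mulVec_transpose_mul (L : Matrix n k ℝ) (u : k → ℝ) :
    ∑ i, (L *ᵥ u) i ^ 2 = u ⬝ᵥ (Lᵀ * L) *ᵥ u := by
  simpa [Lᵀ.transpose_transpose] using (dotProduct_mulVec_mul_transpose Lᵀ u).symm

theorem abs_dotProduct_mulVec_le {D : Matrix n n ℝ} {ε : ℝ} (hD : ∀ i j, |D i j| ≤ ε)
    (u : n → ℝ) : |u ⬝ᵥ D *ᵥ u| ≤ ε * Fintype.card n * ∑ i, u i ^ 2 := by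
  rcases isEmpty_or_nonempty n with hn | ⟨⟨i₀⟩⟩
  · simp
  have hε : 0 ≤ ε := (abs_nonneg _).trans (hD i₀ i₀)
  calc |u ⬝ᵥ D *ᵥ u| = |∑ i, ∑ j, u i * D i j * u j| := by
        simp only [dotProduct, mulVec, mul_sum, mul_assoc]
    _ ≤ ∑ i, ∑ j, ε * (|u i| * |u j|) := by
        refine (abs_sum_le_sum_abs _ _).trans (sum_le_sum fun i _ => ?_)
        refine (abs_sum_le_sum_abs _ _).trans (sum_le_sum fun j _ => ?_)
        rw [abs_mul, abs_mul, mul_right_comm, mul_comm]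
        gcongr
        exact hD i j
    _ = ε * (∑ i, |u i|) ^ 2 := by
        rw [sq, sum_mul_sum, mul_sum]
        simp only [mul_sum]
    _ ≤ ε * (Fintype.card n * ∑ i, u i ^ 2) := by
        gcongr
        simpa using sq_sum_le_card_mul_sum_sq (s := univ) (f := fun i => |u i|)
    _ = ε * Fintype.card n * ∑ i, u i ^ 2 := by ring

theorem eventually_mul_sum_sq_le_dotProduct_mulVec {ι : Type*} {l : Filter ι}
    {M : ι → Matrix n n ℝ} {V : Matrix n n ℝ} (hM : Tendsto M l (𝓝 V)) {a b : ℝ} (hba : b < a)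
    (hV : ∀ u, a * ∑ i, u i ^ 2 ≤ u ⬝ᵥ V *ᵥ u) :
    ∀ᶠ s in l, ∀ u, b * ∑ i, u i ^ 2 ≤ u ⬝ᵥ M s *ᵥ u := by
  set ε := (a - b) / (Fintype.card n + 1)
  have hε : 0 < ε := by have := sub_pos.2 hba; positivity
  have hclose : ∀ᶠ s in l, ∀ i j, |(M s - V) i j| ≤ ε := by
    simp only [eventually_all]
    intro i j
    have hij : Tendsto (fun s => M s i j) l (𝓝 (V i j)) :=
      (continuous_apply j).tendsto _ |>.comp ((continuous_apply i).tendsto _ |>.comp hM)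
    filter_upwards [Metric.tendsto_nhds.1 hij ε hε] with s hs
    exact (Real.dist_eq _ _ ▸ hs).le
  filter_upwards [hclose] with s hs u
  have hdiff := abs_le.1 (abs_dotProduct_mulVec_le hs u)
  have hcard : ε * Fintype.card n ≤ a - b := by
    rw [div_mul_eq_mul_div, div_le_iff₀ (by positivity)]
    nlinarith [sub_pos.2 hba]
  have hsq : 0 ≤ ∑ i, u i ^ 2 := by positivity
  rw [sub_mulVec, dotProduct_sub] at hdiff
  linarith [hV u, hdiff.1, mul_le_mul_of_nonneg_right hcard hsq]

theorem mul_dotProduct_mulVec_le_sum_sq_mulVec {G : Matrix n n ℝ} {s : ℝ} (hs : 0 ≤ s)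
    (hG : ∀ u, s * ∑ i, u i ^ 2 ≤ u ⬝ᵥ G *ᵥ u) (u : n → ℝ) :
    s * (u ⬝ᵥ G *ᵥ u) ≤ ∑ i, (G *ᵥ u) i ^ 2 := by
  have hq := hG u
  have hcs : (u ⬝ᵥ G *ᵥ u) ^ 2 ≤ (∑ i, u i ^ 2) * ∑ i, (G *ᵥ u) i ^ 2 :=
    sum_mul_sq_le_sq_mul_sq _ _ _
  have hq0 : 0 ≤ u ⬝ᵥ G *ᵥ u := le_trans (by positivity) hq
  rcases (sum_nonneg fun i (_ : i ∈ univ) => sq_nonneg (u i)).eq_or_lt with hu | hu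
  · rw [← hu, zero_mul] at hcs
    have : u ⬝ᵥ G *ᵥ u = 0 := pow_eq_zero_iff two_ne_zero |>.1 (le_antisymm hcs (sq_nonneg _))
    rw [this, mul_zero]
    positivity
  · refine le_of_mul_le_mul_left ?_ hu
    nlinarith

end Matrix

namespace Matrix.IsHermitian

variable {n : Type*} [Fintype n] [DecidableEq n] {A : Matrix n n ℝ} (hA : A.IsHermitian)

noncomputable def eigenCoords : (n → ℝ) →ₗ[ℝ] n → ℝ :=
  (hA.eigenvectorUnitary : Matrix n n ℝ)ᵀ.mulVecLin

theorem eigenCoords_apply (x : n → ℝ) :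
    hA.eigenCoords x = (hA.eigenvectorUnitary : Matrix n n ℝ)ᵀ *ᵥ x := rfl

theorem eigenvectorUnitary_mul_transpose :
    (hA.eigenvectorUnitary : Matrix n n ℝ) * (hA.eigenvectorUnitary : Matrix n n ℝ)ᵀ = 1 := by
  simpa [star_eq_conjTranspose] using Unitary.coe_mul_star_self hA.eigenvectorUnitary

theorem mulVec_eigenCoords (x : n → ℝ) :
    (hA.eigenvectorUnitary : Matrix n n ℝ) *ᵥ hA.eigenCoords x = x := by
  rw [eigenCoords_apply, mulVec_mulVec, eigenvectorUnitary_mul_transpose, one_mulVec]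

theorem sum_eigenCoords_sq (x : n → ℝ) : ∑ i, hA.eigenCoords x i ^ 2 = ∑ i, x i ^ 2 := by
  rw [eigenCoords_apply, sum_sq_mulVec_transpose_mul, transpose_transpose,
    eigenvectorUnitary_mul_transpose, one_mulVec]
  simp only [dotProduct, sq]

theorem dotProduct_mulVec_eq_sum_eigenvalues (x : n → ℝ) :
    x ⬝ᵥ A *ᵥ x = ∑ i, hA.eigenvalues i * hA.eigenCoords x i ^ 2 := by
  conv_lhs => rw [hA.spectral_theorem, Unitary.conjStarAlgAut_apply]
  rw [star_eq_conjTranspose, conjTranspose_eq_transpose_of_trivial, ← mulVec_mulVec,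
    ← mulVec_mulVec, dotProduct_mulVec, ← mulVec_transpose]
  simp only [eigenCoords_apply, dotProduct, mulVec_diagonal, Function.comp_apply,
    RCLike.ofReal_real_eq_id, id_eq, sq]
  exact sum_congr rfl fun i _ => by ring

theorem eigenCoords_ne_zero {x : n → ℝ} (hx : x ≠ 0) : hA.eigenCoords x ≠ 0 := fun h =>
  hx (by rw [← hA.mulVec_eigenCoords x, h, mulVec_zero])

theorem mul_sum_sq_le_dotProduct_mulVec {t : ℝ} (ht : ∀ i, t ≤ hA.eigenvalues i) (x : n → ℝ) :
    t * ∑ i, x i ^ 2 ≤ x ⬝ᵥ A *ᵥ x := by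
  rw [hA.dotProduct_mulVec_eq_sum_eigenvalues, ← hA.sum_eigenCoords_sq x, mul_sum]
  exact sum_le_sum fun i _ => mul_le_mul_of_nonneg_right (ht i) (sq_nonneg _)

theorem finrank_le_card_eigenvalues_ge (W : Submodule ℝ (n → ℝ)) {t : ℝ}
    (hW : ∀ x ∈ W, t * ∑ i, x i ^ 2 ≤ x ⬝ᵥ A *ᵥ x) :
    Module.finrank ℝ W ≤ #{i | t ≤ hA.eigenvalues i} := by
  refine Module.finrank_le_card_of_exists_apply_ne_zero hA.eigenCoords W _ fun x hx hx0 => ?_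
  by_contra! hT
  have hlt := sum_mul_sq_lt_mul_sum_sq (hA.eigenCoords_ne_zero hx0) fun i hi => by
    by_contra! h
    exact hi (hT i (by simpa using h))
  rw [← hA.dotProduct_mulVec_eq_sum_eigenvalues, hA.sum_eigenCoords_sq] at hlt
  exact (hW x hx).not_gt hlt

theorem finrank_le_card_eigenvalues_le (W : Submodule ℝ (n → ℝ)) {t : ℝ}
    (hW : ∀ x ∈ W, x ⬝ᵥ A *ᵥ x ≤ t * ∑ i, x i ^ 2) :
    Module.finrank ℝ W ≤ #{i | hA.eigenvalues i ≤ t} := by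
  refine Module.finrank_le_card_of_exists_apply_ne_zero hA.eigenCoords W _ fun x hx hx0 => ?_
  by_contra! hT
  have hlt := sum_mul_sq_lt_mul_sum_sq (f := fun i => -hA.eigenvalues i) (t := -t)
    (hA.eigenCoords_ne_zero hx0) fun i hi => by
      by_contra! h
      exact hi (hT i (by simpa using h))
  simp only [neg_mul, sum_neg_distrib, neg_lt_neg_iff] at hlt
  rw [← hA.dotProduct_mulVec_eq_sum_eigenvalues, hA.sum_eigenCoords_sq] at hlt
  exact (hW x hx).not_gt hlt

end Matrix.IsHermitian

theorem le_eigDesc_of_lt_card {k : ℕ} {M : Matrix (Fin k) (Fin k) ℝ} (hM : M.IsHermitian)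
    {t : ℝ} {j : Fin k} (hj : (j : ℕ) < #{i | t ≤ hM.eigenvalues i}) : t ≤ eigDesc hM j := by
  set σ := Tuple.sort hM.eigenvalues
  have hcard : #{i | t ≤ hM.eigenvalues (σ i)} = #{i | t ≤ hM.eigenvalues i} :=
    card_equiv σ (by simp)
  have hmono : Monotone (hM.eigenvalues ∘ σ) := Tuple.monotone_sort _
  by_contra! hlt
  have hsub : ({i | t ≤ hM.eigenvalues (σ i)} : Finset (Fin k)) ⊆ Ioi j.rev := fun i hi => by
    simp only [mem_filter, mem_univ, true_and] at hi
    exact mem_Ioi.2 (lt_of_not_ge fun hij => (hi.trans (hmono hij)).not_gt hlt)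
  have := card_le_card hsub
  rw [Fin.card_Ioi, Fin.val_rev, hcard] at this
  omega

theorem eigDesc_le_of_le_add_card {k : ℕ} {M : Matrix (Fin k) (Fin k) ℝ} (hM : M.IsHermitian)
    {t : ℝ} {j : Fin k} (hj : k ≤ j + #{i | hM.eigenvalues i ≤ t}) : eigDesc hM j ≤ t := by
  set σ := Tuple.sort hM.eigenvalues
  have hcard : #{i | hM.eigenvalues (σ i) ≤ t} = #{i | hM.eigenvalues i ≤ t} :=
    card_equiv σ (by simp)
  have hmono : Monotone (hM.eigenvalues ∘ σ) := Tuple.monotone_sort _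
  by_contra! hlt
  have hsub : ({i | hM.eigenvalues (σ i) ≤ t} : Finset (Fin k)) ⊆ Iio j.rev := fun i hi => by
    simp only [mem_filter, mem_univ, true_and] at hi
    exact mem_Iio.2 (lt_of_not_ge fun hij => (hlt.trans_le (hmono hij)).not_ge hi)
  have := card_le_card hsub
  rw [Fin.card_Iio, Fin.val_rev, hcard] at this
  omega

namespace Matrix

variable {n k : Type*} [Fintype n] [Fintype k] [DecidableEq n] (L : Matrix n k ℝ)
  (S : Matrix n n ℝ) (hY : (L * Lᵀ + S).IsHermitian)

theorem card_le_card_eigenvalues_mul_transpose_add_ge {c : ℝ}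
    (hS : ∀ x, c * ∑ i, x i ^ 2 ≤ x ⬝ᵥ S *ᵥ x) :
    Fintype.card n ≤ #{i | c ≤ hY.eigenvalues i} := by
  have h := hY.finrank_le_card_eigenvalues_ge ⊤ fun x _ => by
    rw [dotProduct_mulVec_mul_transpose_add]
    linarith [hS x, sum_nonneg fun j (_ : j ∈ univ) => sq_nonneg ((Lᵀ *ᵥ x) j)]
  simpa using h

theorem card_le_card_eigenvalues_mul_transpose_add_le_add {c : ℝ}
    (hS : ∀ x, x ⬝ᵥ S *ᵥ x ≤ c * ∑ i, x i ^ 2) :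
    Fintype.card n ≤ #{i | hY.eigenvalues i ≤ c} + Fintype.card k := by
  have hker := hY.finrank_le_card_eigenvalues_le (LinearMap.ker Lᵀ.mulVecLin) fun x hx => by
    rw [dotProduct_mulVec_mul_transpose_add, show Lᵀ *ᵥ x = 0 from hx]
    simpa using hS x
  have hrange := Submodule.finrank_le (LinearMap.range Lᵀ.mulVecLin)
  have hsum := LinearMap.finrank_range_add_finrank_ker Lᵀ.mulVecLin
  simp only [Module.finrank_fintype_fun_eq_card] at hrange hsum
  omega

theorem card_le_card_eigenvalues_mul_transpose_add_ge_of_transpose_mul {s : ℝ} (hs : 0 < s)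
    (hS : ∀ x, 0 ≤ x ⬝ᵥ S *ᵥ x) (hG : ∀ u, s * ∑ i, u i ^ 2 ≤ u ⬝ᵥ (Lᵀ * L) *ᵥ u) :
    Fintype.card k ≤ #{i | s ≤ hY.eigenvalues i} := by
  have hinj : Function.Injective L.mulVecLin := by
    rw [← LinearMap.ker_eq_bot, LinearMap.ker_eq_bot']
    intro u hu
    have hq := hG u
    rw [← sum_sq_mulVec_transpose_mul, show L *ᵥ u = 0 from hu] at hq
    simp only [Pi.zero_apply, zero_pow two_ne_zero, sum_const_zero] at hq
    have hu0 : ∑ i, u i ^ 2 = 0 :=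
      le_antisymm (nonpos_of_mul_nonpos_right hq hs) (sum_nonneg fun i _ => sq_nonneg _)
    funext i
    exact pow_eq_zero_iff two_ne_zero |>.1
      (congrFun ((Fintype.sum_eq_zero_iff_of_nonneg fun i => sq_nonneg (u i)).1 hu0) i)
  have h := hY.finrank_le_card_eigenvalues_ge (LinearMap.range L.mulVecLin) fun x hx => by
    obtain ⟨u, rfl⟩ := hx
    simp only [mulVecLin_apply]
    rw [dotProduct_mulVec_mul_transpose_add, mulVec_mulVec, sum_sq_mulVec_transpose_mul]
    linarith [hS (L *ᵥ u), mul_dotProduct_mulVec_le_sum_sq_mulVec hs.le hG u]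
  rwa [LinearMap.finrank_range_of_inj hinj, Module.finrank_fintype_fun_eq_card] at h

end Matrix

theorem stmt13_general (m : ℕ) (c₁ c₂ : ℝ) (hc₂ : 0 < c₂)
    (L : ∀ p : ℕ, Matrix (Fin p) (Fin m) ℝ)
    (Se : ∀ p : ℕ, Matrix (Fin p) (Fin p) ℝ)
    (hC : ∀ p, ∀ x : Fin p → ℝ,
      c₂ * (∑ i, x i ^ 2) ≤ x ⬝ᵥ (Se p).mulVec x ∧
        x ⬝ᵥ (Se p).mulVec x ≤ c₁ * (∑ i, x i ^ 2))
    (V : Matrix (Fin m) (Fin m) ℝ) (hVpos : V.PosDef)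
    (hVeig : ∀ i, c₂ ≤ hVpos.1.eigenvalues i ∧ hVpos.1.eigenvalues i ≤ c₁)
    (hB : ∀ i j, Tendsto (fun p : ℕ => ((L p)ᵀ * L p) i j / (p : ℝ)) atTop (𝓝 (V i j))) :
    ∃ c : ℝ, 0 < c ∧ ∃ p₀ : ℕ, ∀ p, p₀ ≤ p →
      ∀ hY : (L p * (L p)ᵀ + Se p).IsHermitian,
        (∀ j : Fin p, (j : ℕ) < m → c * p ≤ eigDesc hY j) ∧
        (∀ j : Fin p, m ≤ (j : ℕ) → c₂ ≤ eigDesc hY j ∧ eigDesc hY j ≤ c₁) := by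
  have hV := hVpos.1.mul_sum_sq_le_dotProduct_mulVec fun i => (hVeig i).1
  have hlim : Tendsto (fun p : ℕ => (p : ℝ)⁻¹ • ((L p)ᵀ * L p)) atTop (𝓝 V) :=
    tendsto_pi_nhds.2 fun i => tendsto_pi_nhds.2 fun j => by
      simpa only [Matrix.smul_apply, smul_eq_mul, inv_mul_eq_div] using hB i j
  obtain ⟨p₀, hp₀⟩ := eventually_atTop.1 <|
    (eventually_mul_sum_sq_le_dotProduct_mulVec hlim (half_lt_self hc₂) hV).and
      (eventually_gt_atTop 0)
  refine ⟨c₂ / 2, half_pos hc₂, p₀, fun p hp hY => ?_⟩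
  obtain ⟨hGp, hp0⟩ := hp₀ p hp
  have hG : ∀ u, c₂ / 2 * p * ∑ i, u i ^ 2 ≤ u ⬝ᵥ ((L p)ᵀ * L p) *ᵥ u := fun u => by
    have h := hGp u
    rw [smul_mulVec, dotProduct_smul, smul_eq_mul, le_inv_mul_iff₀ (by positivity)] at h
    linarith
  have hSe_nonneg : ∀ x, 0 ≤ x ⬝ᵥ Se p *ᵥ x := fun x => le_trans (by positivity) (hC p x).1
  have hspike := card_le_card_eigenvalues_mul_transpose_add_ge_of_transpose_mul (L p) (Se p) hY
    (by positivity) hSe_nonneg hG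
  have hbulk_ge := card_le_card_eigenvalues_mul_transpose_add_ge (L p) (Se p) hY fun x => (hC p x).1
  have hbulk_le := card_le_card_eigenvalues_mul_transpose_add_le_add (L p) (Se p) hY
    fun x => (hC p x).2
  simp only [Fintype.card_fin] at hspike hbulk_ge hbulk_le
  refine ⟨fun j hj => le_eigDesc_of_lt_card hY (by omega), fun j hj => ?_⟩
  exact ⟨le_eigDesc_of_lt_card hY (by omega), eigDesc_le_of_le_add_card hY (by omega)⟩

/-- Under Assumptions B and C, the eigenvalues of `Σ_y = LLᵀ + Σ_ε` are spiked: the `m`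
leading eigenvalues grow at rate `p`, while the remaining ones stay in `[c₂, c₁]`. -/
theorem stmt13 (m : ℕ) (hm : 1 ≤ m) (c₁ c₂ : ℝ) (hc₂ : 0 < c₂) (hc₁₂ : c₂ ≤ c₁)
    (L : ∀ p : ℕ, Matrix (Fin p) (Fin m) ℝ)
    (Se : ∀ p : ℕ, Matrix (Fin p) (Fin p) ℝ)
    (hSym : ∀ p, (Se p).IsHermitian)
    (hC : ∀ p, ∀ x : Fin p → ℝ,
      c₂ * (∑ i, x i ^ 2) ≤ x ⬝ᵥ (Se p).mulVec x ∧
        x ⬝ᵥ (Se p).mulVec x ≤ c₁ * (∑ i, x i ^ 2))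
    (V : Matrix (Fin m) (Fin m) ℝ) (hVpos : V.PosDef)
    (hVeig : ∀ i, c₂ ≤ hVpos.1.eigenvalues i ∧ hVpos.1.eigenvalues i ≤ c₁)
    (hB : ∀ i j, Tendsto (fun p : ℕ => ((L p)ᵀ * L p) i j / (p : ℝ)) atTop (𝓝 (V i j))) :
    ∃ c : ℝ, 0 < c ∧ ∃ p₀ : ℕ, ∀ p, p₀ ≤ p →
      ∀ hY : (L p * (L p)ᵀ + Se p).IsHermitian,
        (∀ j : Fin p, (j : ℕ) < m → c * p ≤ eigDesc hY j) ∧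
        (∀ j : Fin p, m ≤ (j : ℕ) → c₂ ≤ eigDesc hY j ∧ eigDesc hY j ≤ c₁) :=
  stmt13_general m c₁ c₂ hc₂ L Se hC V hVpos hVeig hB
end

section
/- Let p ≥ 1, let Σ ∈ ℝ^{p×p} be symmetric positive definite with smallest eigenvalue λ_min(Σ), and let g be a standard Gaussian vector in ℝ^p, so that u := Σ^{1/2} g is a centered Gaussian vector with covariance Σ. Then the matrix E[ u uᵀ / ‖u‖² ] is well defined and the Loewner ordering E[ u uᵀ / ‖u‖² ] ≼ Σ / (p · λ_min(Σ)) holds, i.e. Σ/(p·λ_min(Σ)) − E[ u uᵀ / ‖u‖² ] is positive semidefinite. -/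
/-!
Write `u = A g` with `A = Σ^{1/2}`. For a fixed `x`, symmetry of `A` gives
`xᵀ E[u uᵀ/‖u‖²] x = E[(A x ⬝ g)² / gᵀ Σ g] ≤ λ_min⁻¹ E[(A x ⬝ g)² / ‖g‖²]`.
Flipping the sign of one coordinate of `g`, resp. swapping two coordinates, preserves its law, so
`E[g gᵀ/‖g‖²]` has zero off-diagonal entries and equal diagonal entries summing to `1`; hence it is
`I/p`, and the right-hand side equals `λ_min⁻¹ ‖A x‖² / p = xᵀ Σ x / (p λ_min)`.
-/

open MeasureTheory ProbabilityTheory Matrix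

noncomputable def Matrix.PosSemidef.sqrt {n 𝕜 : Type*} [Fintype n] [RCLike 𝕜] [PartialOrder 𝕜]
    [DecidableEq n] {A : Matrix n n 𝕜} (hA : A.PosSemidef) : Matrix n n 𝕜 :=
  (hA.1.eigenvectorUnitary : Matrix n n 𝕜) * diagonal ((↑) ∘ (√·) ∘ hA.1.eigenvalues) *
    (star hA.1.eigenvectorUnitary : Matrix n n 𝕜)

namespace Matrix.PosSemidef

open scoped ComplexOrder

variable {n 𝕜 : Type*} [Fintype n] [RCLike 𝕜] [DecidableEq n] {A : Matrix n n 𝕜}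
  (hA : A.PosSemidef)
include hA

lemma isHermitian_sqrt : hA.sqrt.IsHermitian := by
  simp only [IsHermitian, Matrix.PosSemidef.sqrt, conjTranspose_mul, diagonal_conjTranspose,
    star_eq_conjTranspose, conjTranspose_conjTranspose, mul_assoc]
  congr 3
  ext i
  simp

lemma sqrt_mul_self : hA.sqrt * hA.sqrt = A := by
  conv_rhs => rw [hA.1.spectral_theorem, Unitary.conjStarAlgAut_apply]
  simp only [Matrix.PosSemidef.sqrt, mul_assoc, ← mul_assoc (star _ : Matrix n n 𝕜),
    Unitary.coe_star_mul_self, one_mul, diagonal_mul_diagonal', ← mul_assoc (diagonal _)]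
  congr 3
  ext i
  simp [← RCLike.ofReal_mul, Real.mul_self_sqrt (hA.eigenvalues_nonneg i)]

end Matrix.PosSemidef

namespace Matrix.IsHermitian

open scoped MatrixOrder

lemma iInf_eigenvalues_mul_dotProduct_self_le {n : Type*} [Fintype n] [DecidableEq n]
    {S : Matrix n n ℝ} (hS : S.IsHermitian) (x : n → ℝ) :
    (⨅ i, hS.eigenvalues i) * (x ⬝ᵥ x) ≤ x ⬝ᵥ S *ᵥ x := by
  have hle : algebraMap ℝ (Matrix n n ℝ) (⨅ i, hS.eigenvalues i) ≤ S := by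
    rw [algebraMap_le_iff_le_spectrum (R := ℝ) hS.isSelfAdjoint,
      hS.spectrum_real_eq_range_eigenvalues]
    rintro _ ⟨i, rfl⟩
    exact ciInf_le (Set.finite_range _).bddBelow i
  simpa only [star_trivial, sub_mulVec, dotProduct_sub, sub_nonneg, Algebra.algebraMap_eq_smul_one,
    smul_mulVec, one_mulVec, dotProduct_smul, smul_eq_mul] using
    (Matrix.le_iff.mp hle).dotProduct_mulVec_nonneg x

end Matrix.IsHermitian

/-- The matrix `E[w wᵀ / ‖w‖²]`; its integrand is `0` where `w = 0`. -/
noncomputable def normalizedSecondMoment {ι Ω : Type*} [Fintype ι] [MeasurableSpace Ω]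
    (μ : Measure Ω) (w : Ω → ι → ℝ) : Matrix ι ι ℝ :=
  of fun i j => ∫ ω, w ω i * w ω j / ∑ k, w ω k ^ 2 ∂μ

section NormalizedSecondMoment

variable {ι Ω Ω' : Type*} [Fintype ι] [MeasurableSpace Ω] [MeasurableSpace Ω'] {μ : Measure Ω}

lemma abs_mul_div_sum_sq_le_one (w : ι → ℝ) (i j : ι) : |w i * w j / ∑ k, w k ^ 2| ≤ 1 := by
  have hs : 0 ≤ ∑ k, w k ^ 2 := by positivity
  have hle : ∀ i, |w i| ≤ √(∑ k, w k ^ 2) := fun i =>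
    Real.abs_le_sqrt (Finset.single_le_sum (fun k _ => sq_nonneg (w k)) (Finset.mem_univ i))
  rw [abs_div, abs_of_nonneg hs, abs_mul]
  refine div_le_one_of_le₀ ?_ hs
  calc |w i| * |w j| ≤ √(∑ k, w k ^ 2) * √(∑ k, w k ^ 2) :=
        mul_le_mul (hle i) (hle j) (abs_nonneg _) (Real.sqrt_nonneg _)
    _ = ∑ k, w k ^ 2 := Real.mul_self_sqrt hs

lemma sq_dotProduct_div_sum_sq (v w : ι → ℝ) :
    (v ⬝ᵥ w) ^ 2 / ∑ k, w k ^ 2 = ∑ i, ∑ j, v i * v j * (w i * w j / ∑ k, w k ^ 2) := by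
  simp only [dotProduct, sq, Finset.sum_mul_sum, Finset.sum_div, mul_div_assoc']
  exact Finset.sum_congr rfl fun i _ => Finset.sum_congr rfl fun j _ => by ring

lemma measurable_mul_div_sum_sq (i j : ι) :
    Measurable fun y : ι → ℝ => y i * y j / ∑ k, y k ^ 2 :=
  Measurable.div (by fun_prop) (by fun_prop)

lemma integrable_mul_div_sum_sq [IsFiniteMeasure μ] {w : Ω → ι → ℝ} (hw : AEMeasurable w μ)
    (i j : ι) : Integrable (fun ω => w ω i * w ω j / ∑ k, w ω k ^ 2) μ :=
  .of_bound ((measurable_mul_div_sum_sq i j).comp_aemeasurable hw).aestronglyMeasurable 1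
    (ae_of_all _ fun ω => abs_mul_div_sum_sq_le_one (w ω) i j)

lemma integrable_sq_dotProduct_div_sum_sq [IsFiniteMeasure μ] {w : Ω → ι → ℝ}
    (hw : AEMeasurable w μ) (v : ι → ℝ) :
    Integrable (fun ω => (v ⬝ᵥ w ω) ^ 2 / ∑ k, w ω k ^ 2) μ := by
  simp_rw [sq_dotProduct_div_sum_sq]
  exact integrable_finsetSum _ fun i _ => integrable_finsetSum _ fun j _ =>
    (integrable_mul_div_sum_sq hw i j).const_mul _

lemma dotProduct_normalizedSecondMoment_mulVec [IsFiniteMeasure μ] {w : Ω → ι → ℝ}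
    (hw : AEMeasurable w μ) (v : ι → ℝ) :
    v ⬝ᵥ normalizedSecondMoment μ w *ᵥ v = ∫ ω, (v ⬝ᵥ w ω) ^ 2 / ∑ k, w ω k ^ 2 ∂μ := by
  simp_rw [sq_dotProduct_div_sum_sq]
  rw [integral_finsetSum _ fun i _ => integrable_finsetSum _ fun j _ =>
    (integrable_mul_div_sum_sq hw i j).const_mul _]
  simp_rw [integral_finsetSum _ fun j _ => (integrable_mul_div_sum_sq hw _ j).const_mul _,
    integral_const_mul]
  simp only [dotProduct, mulVec, normalizedSecondMoment, of_apply, Finset.mul_sum]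
  exact Finset.sum_congr rfl fun i _ => Finset.sum_congr rfl fun j _ => by ring

lemma normalizedSecondMoment_isHermitian (μ : Measure Ω) (w : Ω → ι → ℝ) :
    (normalizedSecondMoment μ w).IsHermitian := by
  ext i j
  simp only [conjTranspose_apply, normalizedSecondMoment, of_apply, star_trivial, mul_comm]

lemma normalizedSecondMoment_map {g : Ω → Ω'} (hg : AEMeasurable g μ) {w : Ω' → ι → ℝ}
    (hw : Measurable w) :
    normalizedSecondMoment (μ.map g) w = normalizedSecondMoment μ fun ω => w (g ω) := by
  ext i j
  exact integral_map hg ((measurable_mul_div_sum_sq i j).comp hw).aestronglyMeasurable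

end NormalizedSecondMoment

section ProductMeasure

variable {ι : Type*} [Fintype ι] (ν : Measure ℝ)

lemma integral_mul_div_sum_sq_pi_of_ne [SigmaFinite ν] [ν.IsNegInvariant] {i j : ι}
    (hij : i ≠ j) : ∫ y, y i * y j / ∑ k, y k ^ 2 ∂(Measure.pi fun _ => ν) = 0 := by
  classical
  let flip : ι → ℝ → ℝ := fun k => if k = i then Neg.neg else id
  have hflip : MeasurePreserving (fun y : ι → ℝ => fun k => flip k (y k))
      (Measure.pi fun _ => ν) (Measure.pi fun _ => ν) :=
    measurePreserving_pi _ _ fun k => by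
      by_cases hk : k = i
      · simpa [flip, hk] using Measure.measurePreserving_neg ν
      · simpa [flip, hk] using MeasurePreserving.id ν
  have hodd (y : ι → ℝ) : flip i (y i) * flip j (y j) / ∑ k, flip k (y k) ^ 2 =
      -(y i * y j / ∑ k, y k ^ 2) := by
    have hsq (k : ι) : flip k (y k) ^ 2 = y k ^ 2 := by by_cases hk : k = i <;> simp [flip, hk]
    simp only [hsq, flip, if_pos rfl, if_neg hij.symm, id]
    ring
  have h := integral_map (μ := Measure.pi fun _ => ν) hflip.measurable.aemeasurable
    (measurable_mul_div_sum_sq i j).aestronglyMeasurable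
  rw [hflip.map_eq] at h
  simp only [hodd, integral_neg] at h
  linarith

lemma integral_mul_self_div_sum_sq_pi_eq [SigmaFinite ν] (i j : ι) :
    ∫ y, y i * y i / ∑ k, y k ^ 2 ∂(Measure.pi fun _ => ν) =
      ∫ y, y j * y j / ∑ k, y k ^ 2 ∂(Measure.pi fun _ => ν) := by
  classical
  have hswap := measurePreserving_arrowCongr' (fun _ => ν) (fun _ => ν) (Equiv.swap i j)
    (MeasurableEquiv.refl ℝ) fun _ => MeasurePreserving.id ν
  rw [← hswap.integral_comp']
  congr 1
  ext y
  simp only [MeasurableEquiv.arrowCongr', Equiv.arrowCongr', Equiv.arrowCongr,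
    MeasurableEquiv.coe_mk, Equiv.coe_fn_mk, Equiv.symm_swap, Function.comp_apply,
    Equiv.swap_apply_left]
  show y j * y j / ∑ k, y (Equiv.swap i j k) ^ 2 = _
  rw [Equiv.sum_comp (Equiv.swap i j) fun k => y k ^ 2]

lemma ae_sum_sq_ne_zero_pi [SigmaFinite ν] (hν : ν {0} = 0) (i : ι) :
    ∀ᵐ y ∂(Measure.pi fun _ : ι => ν), ∑ k, y k ^ 2 ≠ 0 := by
  have hi : ∀ᵐ y ∂(Measure.pi fun _ => ν), y i ≠ 0 :=
    ae_iff.mpr <| by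
      simp only [ne_eq, not_not]
      exact Measure.pi_eval_preimage_null (fun _ : ι => ν) (i := i) hν
  filter_upwards [hi] with y hy
  have hpos : 0 < y i ^ 2 := by positivity
  exact (hpos.trans_le (Finset.single_le_sum (fun k _ => sq_nonneg (y k)) (Finset.mem_univ i))).ne'

lemma integral_mul_self_div_sum_sq_pi [IsProbabilityMeasure ν] (hν : ν {0} = 0) (i : ι) :
    ∫ y, y i * y i / ∑ k, y k ^ 2 ∂(Measure.pi fun _ => ν) = (Fintype.card ι : ℝ)⁻¹ := by
  have hsum : ∑ j : ι, ∫ y, y j * y j / ∑ k, y k ^ 2 ∂(Measure.pi fun _ => ν) = 1 := by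
    rw [← integral_finsetSum _ fun j _ =>
      integrable_mul_div_sum_sq (μ := Measure.pi fun _ => ν) aemeasurable_id' j j]
    have hone : ∀ᵐ y ∂(Measure.pi fun _ : ι => ν), ∑ j, y j * y j / ∑ k, y k ^ 2 = 1 := by
      filter_upwards [ae_sum_sq_ne_zero_pi ν hν i] with y hy
      simp only [← Finset.sum_div, ← sq, div_self hy]
    simp [integral_congr_ae hone]
  simp only [← integral_mul_self_div_sum_sq_pi_eq ν i, Finset.sum_const, Finset.card_univ,
    nsmul_eq_mul] at hsum
  exact eq_inv_of_mul_eq_one_right hsum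

lemma normalizedSecondMoment_pi [DecidableEq ι] [IsProbabilityMeasure ν] [ν.IsNegInvariant]
    (hν : ν {0} = 0) :
    normalizedSecondMoment (Measure.pi fun _ : ι => ν) (fun y => y) =
      (Fintype.card ι : ℝ)⁻¹ • 1 := by
  ext i j
  rcases eq_or_ne i j with rfl | hij
  · simpa [normalizedSecondMoment] using integral_mul_self_div_sum_sq_pi ν hν i
  · simpa [normalizedSecondMoment, one_apply_ne hij] using integral_mul_div_sum_sq_pi_of_ne ν hij

end ProductMeasure

lemma Matrix.PosDef.iInf_eigenvalues_pos {n : Type*} [Fintype n] [DecidableEq n] [Nonempty n]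
    {S : Matrix n n ℝ} (hS : S.PosDef) : 0 < ⨅ i, hS.1.eigenvalues i := by
  obtain ⟨i, hi⟩ := exists_eq_ciInf_of_finite (f := hS.1.eigenvalues)
  exact hi ▸ hS.eigenvalues_pos i

lemma Matrix.IsHermitian.dotProduct_mulVec_comm {n : Type*} [Fintype n] {B : Matrix n n ℝ}
    (hB : B.IsHermitian) (x y : n → ℝ) : x ⬝ᵥ B *ᵥ y = B *ᵥ x ⬝ᵥ y := by
  rw [dotProduct_mulVec, ← mulVec_transpose, ← conjTranspose_eq_transpose_of_trivial, hB.eq]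

lemma sum_sq_eq_dotProduct_self_s17 {ι : Type*} [Fintype ι] (y : ι → ℝ) :
    ∑ k, y k ^ 2 = y ⬝ᵥ y := by
  simp only [dotProduct, sq]

section LoewnerBound

variable {ι : Type*} [Fintype ι] {S B : Matrix ι ι ℝ} (hB : B.IsHermitian) (hBS : B * B = S)
include hB hBS

lemma mulVec_dotProduct_mulVec_self (x : ι → ℝ) : B *ᵥ x ⬝ᵥ B *ᵥ x = x ⬝ᵥ S *ᵥ x := by
  rw [← hB.dotProduct_mulVec_comm, mulVec_mulVec, hBS]

variable [DecidableEq ι] (hS : S.IsHermitian) (hmin : 0 < ⨅ i, hS.eigenvalues i)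
include hmin

lemma sq_dotProduct_mulVec_div_le (x y : ι → ℝ) :
    (x ⬝ᵥ B *ᵥ y) ^ 2 / ∑ k, (B *ᵥ y) k ^ 2 ≤
      (⨅ i, hS.eigenvalues i)⁻¹ * ((B *ᵥ x ⬝ᵥ y) ^ 2 / ∑ k, y k ^ 2) := by
  rcases eq_or_ne y 0 with rfl | hy
  · simp
  have hpos : 0 < ∑ k, y k ^ 2 := by
    simpa [sum_sq_eq_dotProduct_self_s17] using dotProduct_self_star_pos_iff.mpr hy
  have hlow : (⨅ i, hS.eigenvalues i) * ∑ k, y k ^ 2 ≤ ∑ k, (B *ᵥ y) k ^ 2 := by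
    rw [sum_sq_eq_dotProduct_self_s17, sum_sq_eq_dotProduct_self_s17,
      mulVec_dotProduct_mulVec_self hB hBS]
    exact hS.iInf_eigenvalues_mul_dotProduct_self_le y
  rw [hB.dotProduct_mulVec_comm, inv_mul_eq_div, div_div, mul_comm (∑ k, y k ^ 2)]
  exact div_le_div_of_nonneg_left (sq_nonneg _) (mul_pos hmin hpos) hlow

lemma dotProduct_normalizedSecondMoment_mulVec_le {P : Measure (ι → ℝ)} [IsFiniteMeasure P]
    {c : ℝ} (hP : normalizedSecondMoment P (fun y => y) = c • 1) (x : ι → ℝ) :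
    x ⬝ᵥ normalizedSecondMoment P (fun y => B *ᵥ y) *ᵥ x ≤
      c * (⨅ i, hS.eigenvalues i)⁻¹ * (x ⬝ᵥ S *ᵥ x) := by
  calc x ⬝ᵥ normalizedSecondMoment P (fun y => B *ᵥ y) *ᵥ x
      = ∫ y, (x ⬝ᵥ B *ᵥ y) ^ 2 / ∑ k, (B *ᵥ y) k ^ 2 ∂P :=
        dotProduct_normalizedSecondMoment_mulVec (by fun_prop) x
    _ ≤ ∫ y, (⨅ i, hS.eigenvalues i)⁻¹ * ((B *ᵥ x ⬝ᵥ y) ^ 2 / ∑ k, y k ^ 2) ∂P :=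
        integral_mono_of_nonneg (ae_of_all _ fun y => by positivity)
          ((integrable_sq_dotProduct_div_sum_sq aemeasurable_id' _).const_mul _)
          (ae_of_all _ (sq_dotProduct_mulVec_div_le hB hBS hS hmin x))
    _ = (⨅ i, hS.eigenvalues i)⁻¹ *
          (B *ᵥ x ⬝ᵥ normalizedSecondMoment P (fun y => y) *ᵥ B *ᵥ x) := by
        rw [integral_const_mul, dotProduct_normalizedSecondMoment_mulVec aemeasurable_id']
    _ = c * (⨅ i, hS.eigenvalues i)⁻¹ * (x ⬝ᵥ S *ᵥ x) := by
        rw [hP, smul_mulVec, one_mulVec, dotProduct_smul, smul_eq_mul,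
          mulVec_dotProduct_mulVec_self hB hBS]
        ring

end LoewnerBound

instance (d : ℕ) : IsProbabilityMeasure (stdGaussian d) := by
  unfold _root_.stdGaussian; infer_instance

instance (v : NNReal) : (gaussianReal 0 v).IsNegInvariant :=
  ⟨by simpa [Measure.neg_def] using gaussianReal_map_neg (μ := 0) (v := v)⟩

lemma normalizedSecondMoment_stdGaussian (p : ℕ) :
    normalizedSecondMoment (stdGaussian p) (fun y => y) = (p : ℝ)⁻¹ • 1 := by
  simpa [_root_.stdGaussian] using normalizedSecondMoment_pi (ι := Fin p) (gaussianReal 0 1)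
    ((nullSingletonClass_gaussianReal one_ne_zero).measure_singleton 0)

/-- For `u = Σ^{1/2} g` a centered Gaussian vector with positive definite covariance `Σ`,
the matrix `E[uuᵀ/‖u‖²]` is well defined (entrywise integrable) and satisfies the Loewner
bound `E[uuᵀ/‖u‖²] ≼ Σ/(p·λ_min(Σ))`. -/
theorem stmt17 (p : ℕ) (hp : 1 ≤ p)
    {Ω : Type*} [MeasurableSpace Ω] (μ : Measure Ω) [IsProbabilityMeasure μ]
    (g : Ω → Fin p → ℝ) (hg : Measure.map g μ = stdGaussian p)
    (S : Matrix (Fin p) (Fin p) ℝ) (hS : S.PosDef) :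
    (∀ i j : Fin p, Integrable (fun ω =>
        hS.posSemidef.sqrt.mulVec (g ω) i * hS.posSemidef.sqrt.mulVec (g ω) j /
          (∑ k, hS.posSemidef.sqrt.mulVec (g ω) k ^ 2)) μ) ∧
    (((p : ℝ) * ⨅ i, hS.1.eigenvalues i)⁻¹ • S -
      Matrix.of (fun i j => ∫ ω,
        hS.posSemidef.sqrt.mulVec (g ω) i * hS.posSemidef.sqrt.mulVec (g ω) j /
          (∑ k, hS.posSemidef.sqrt.mulVec (g ω) k ^ 2) ∂μ)).PosSemidef := by
  set A := hS.posSemidef.sqrt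
  have hg_meas : AEMeasurable g μ := aemeasurable_of_map_neZero (by rw [hg]; infer_instance)
  have hA_meas : Measurable fun y : Fin p → ℝ => A *ᵥ y := by fun_prop
  refine ⟨integrable_mul_div_sum_sq (hA_meas.comp_aemeasurable hg_meas), ?_⟩
  change (_ - normalizedSecondMoment μ fun ω => A *ᵥ g ω).PosSemidef
  rw [← normalizedSecondMoment_map hg_meas hA_meas, hg, posSemidef_iff_dotProduct_mulVec]
  refine ⟨(hS.1.smul (IsSelfAdjoint.all _)).sub (normalizedSecondMoment_isHermitian _ _),
    fun x => ?_⟩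
  have : Nonempty (Fin p) := ⟨⟨0, hp⟩⟩
  have hbound := dotProduct_normalizedSecondMoment_mulVec_le hS.posSemidef.isHermitian_sqrt
    hS.posSemidef.sqrt_mul_self hS.1 hS.iInf_eigenvalues_pos
    (normalizedSecondMoment_stdGaussian p) x
  rw [star_trivial, sub_mulVec, dotProduct_sub, smul_mulVec, dotProduct_smul, smul_eq_mul,
    sub_nonneg, mul_inv]
  exact hbound
end

section
/- Let m ≥ 1 be fixed and let V ∈ ℝ^{m×m} be symmetric positive definite. For each integer p ≥ m, let L_p, L̂_p ∈ ℝ^{p×m} and Ĥ_p ∈ ℝ^{m×m} satisfy: (i) (1/p) L̂_pᵀ L̂_p = I_m for all p; (ii) (1/p) L_pᵀ L_p → V as p → ∞; and (iii) (1/p) ‖L̂_p − L_p Ĥ_p‖_F² → 0 as p → ∞. Then Ĥ_pᵀ V Ĥ_p → I_m as p → ∞. -/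
/-!
Rescaled by `1/√p`, the matrix `L̂_p` has orthonormal columns and `L_p Ĥ_p` is `o(1)`-close to it in
Frobenius norm, so the Gram matrix of `L_p Ĥ_p / √p`, namely `Ĥ_pᵀ A_p Ĥ_p` with
`A_p = (1/p) L_pᵀ L_p`, tends to `I`. Since `V` is positive definite, compactness of the unit
sphere gives `c > 0` with `c ‖X‖² ≤ ‖Xᵀ V X‖`; as `A_p → V`, this keeps `Ĥ_p` bounded, and then
`Ĥ_pᵀ (V - A_p) Ĥ_p → 0`.
-/

open Matrix Filter Topology

open scoped Matrix.Norms.Frobenius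

theorem exists_pos_mul_norm_sq_le {E : Type*} [NormedAddCommGroup E] [NormedSpace ℝ E]
    [FiniteDimensional ℝ E] {f : E → ℝ} (hf : Continuous f) (hpos : ∀ x ≠ 0, 0 < f x)
    (hhom : ∀ (t : ℝ) x, f (t • x) = t ^ 2 * f x) :
    ∃ c > 0, ∀ x, c * ‖x‖ ^ 2 ≤ f x := by
  obtain ⟨c, hc, hcf⟩ := (isCompact_sphere (0 : E) 1).exists_forall_le' hf.continuousOn
    fun x hx => hpos x (ne_zero_of_mem_unit_sphere ⟨x, hx⟩)
  refine ⟨c, hc, fun x => ?_⟩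
  rcases eq_or_ne x 0 with rfl | hx
  · simp [show f 0 = 0 by simpa using hhom 0 0]
  have hsphere : ‖x‖⁻¹ • x ∈ Metric.sphere (0 : E) 1 := by
    simp [norm_smul, norm_ne_zero_iff.mpr hx]
  have h := hcf _ hsphere
  rw [hhom] at h
  have : 0 < ‖x‖ ^ 2 := by positivity
  calc c * ‖x‖ ^ 2 ≤ ‖x‖⁻¹ ^ 2 * f x * ‖x‖ ^ 2 := by gcongr
    _ = f x := by field_simp

namespace Matrix

variable {l n k : Type*} [Fintype l] [Fintype n] [Fintype k]

theorem frobenius_norm_sq (X : Matrix l n ℝ) : ‖X‖ ^ 2 = ∑ i, ∑ j, X i j ^ 2 := by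
  rw [frobenius_norm_def, ← Real.rpow_natCast, ← Real.rpow_mul (by positivity)]
  simp only [Real.rpow_two, Real.norm_eq_abs, sq_abs]
  norm_num

theorem frobenius_norm_sq_eq_trace (X : Matrix l n ℝ) : ‖X‖ ^ 2 = trace (Xᵀ * X) := by
  rw [frobenius_norm_sq, Finset.sum_comm]
  simp [trace, mul_apply, sq]

theorem frobenius_norm_transpose_mul_self_sub_le (N M : Matrix l n ℝ) :
    ‖Nᵀ * N - Mᵀ * M‖ ≤ 2 * ‖N‖ * ‖N - M‖ + ‖N - M‖ ^ 2 := by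
  have hsplit : Nᵀ * N - Mᵀ * M = Nᵀ * (N - M) + (N - M)ᵀ * N - (N - M)ᵀ * (N - M) := by
    simp only [transpose_sub, Matrix.mul_sub, Matrix.sub_mul]; abel
  calc ‖Nᵀ * N - Mᵀ * M‖
      ≤ ‖Nᵀ * (N - M)‖ + ‖(N - M)ᵀ * N‖ + ‖(N - M)ᵀ * (N - M)‖ := by
        rw [hsplit]; exact (norm_sub_le _ _).trans (by gcongr; exact norm_add_le _ _)
    _ ≤ ‖N‖ * ‖N - M‖ + ‖N - M‖ * ‖N‖ + ‖N - M‖ * ‖N - M‖ := by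
        gcongr <;> exact (frobenius_norm_mul _ _).trans (by rw [frobenius_norm_transpose])
    _ = 2 * ‖N‖ * ‖N - M‖ + ‖N - M‖ ^ 2 := by ring

theorem frobenius_norm_transpose_mul_mul_sub_le (X : Matrix n k ℝ) (V A : Matrix n n ℝ) :
    ‖Xᵀ * V * X - Xᵀ * A * X‖ ≤ ‖X‖ ^ 2 * ‖V - A‖ := by
  rw [← Matrix.sub_mul, ← Matrix.mul_sub]
  calc ‖Xᵀ * (V - A) * X‖ ≤ ‖Xᵀ‖ * ‖V - A‖ * ‖X‖ :=
        (frobenius_norm_mul _ _).trans (by gcongr; exact frobenius_norm_mul _ _)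
    _ = ‖X‖ ^ 2 * ‖V - A‖ := by rw [frobenius_norm_transpose]; ring

omit [Fintype k] in
theorem PosDef.transpose_mul_mul_same_eq_zero_iff {V : Matrix n n ℝ} (hV : V.PosDef)
    {X : Matrix n k ℝ} : Xᵀ * V * X = 0 ↔ X = 0 := by
  refine ⟨fun h => ?_, fun h => by simp [h]⟩
  ext i j
  by_contra hij
  have hdiag : (Xᵀ * V * X) j j = Xᵀ j ⬝ᵥ (V *ᵥ Xᵀ j) := by
    simp only [mul_apply, transpose_apply, Finset.sum_mul, mul_assoc, dotProduct, mulVec,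
      Finset.mul_sum]
    exact Finset.sum_comm
  have hpos := hV.dotProduct_mulVec_pos (x := Xᵀ j) fun h0 => hij (congrFun h0 i)
  simp [← hdiag, h] at hpos

theorem PosDef.exists_pos_mul_norm_sq_le {V : Matrix n n ℝ} (hV : V.PosDef) :
    ∃ c > 0, ∀ X : Matrix n k ℝ, c * ‖X‖ ^ 2 ≤ ‖Xᵀ * V * X‖ :=
  _root_.exists_pos_mul_norm_sq_le (by fun_prop)
    (fun X hX => norm_pos_iff.mpr (hV.transpose_mul_mul_same_eq_zero_iff.not.mpr hX))
    (fun t X => by simp [norm_smul, ← mul_assoc, abs_mul_abs_self, sq])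

end Matrix

section Tendsto

variable {α : Type*} {F : Filter α}

theorem tendsto_transpose_mul_self_of_tendsto_norm_sub {ι : α → Type*} [∀ a, Fintype (ι a)]
    {n : Type*} [Fintype n] [DecidableEq n] {N M : ∀ a, Matrix (ι a) n ℝ}
    (hN : ∀ᶠ a in F, (N a)ᵀ * N a = 1) (hNM : Tendsto (fun a => ‖N a - M a‖) F (𝓝 0)) :
    Tendsto (fun a => (M a)ᵀ * M a) F (𝓝 1) := by
  have hbound : ∀ᶠ a in F, ‖(M a)ᵀ * M a - 1‖ ≤
      2 * Real.sqrt (Fintype.card n) * ‖N a - M a‖ + ‖N a - M a‖ ^ 2 := by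
    filter_upwards [hN] with a ha
    have hnorm : ‖N a‖ = Real.sqrt (Fintype.card n) := by
      rw [← Real.sqrt_sq (norm_nonneg _), frobenius_norm_sq_eq_trace, ha, trace_one]
    rw [← norm_neg, neg_sub, ← ha, ← hnorm]
    exact frobenius_norm_transpose_mul_self_sub_le _ _
  refine tendsto_iff_norm_sub_tendsto_zero.mpr
    (squeeze_zero' (.of_forall fun _ => norm_nonneg _) hbound ?_)
  simpa using (hNM.const_mul (2 * Real.sqrt (Fintype.card n))).add (hNM.pow 2)

variable {n k : Type*} [Fintype n] [Fintype k] {V : Matrix n n ℝ} {G : Matrix k k ℝ}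
  {A : α → Matrix n n ℝ} {H : α → Matrix n k ℝ}

theorem exists_eventually_norm_sq_le_of_tendsto_transpose_mul_mul (hV : V.PosDef)
    (hA : Tendsto A F (𝓝 V)) (hG : Tendsto (fun a => (H a)ᵀ * A a * H a) F (𝓝 G)) :
    ∃ C, ∀ᶠ a in F, ‖H a‖ ^ 2 ≤ C := by
  obtain ⟨c, hc, hcoer⟩ := hV.exists_pos_mul_norm_sq_le (k := k)
  have hAV : ∀ᶠ a in F, ‖V - A a‖ ≤ c / 2 :=
    ((tendsto_iff_norm_sub_tendsto_zero.mp hA).eventually_le_const (half_pos hc)).mono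
      fun a ha => by rwa [norm_sub_rev]
  have hGb : ∀ᶠ a in F, ‖(H a)ᵀ * A a * H a‖ ≤ ‖G‖ + 1 :=
    hG.norm.eventually_le_const (lt_add_one _)
  refine ⟨2 * (‖G‖ + 1) / c, ?_⟩
  filter_upwards [hAV, hGb] with a hAa hGa
  have hVH := (norm_le_norm_add_norm_sub' _ ((H a)ᵀ * A a * H a)).trans
    (add_le_add hGa (frobenius_norm_transpose_mul_mul_sub_le (H a) V (A a)))
  rw [le_div_iff₀ hc]
  nlinarith [hcoer (H a), sq_nonneg ‖H a‖]

theorem tendsto_transpose_mul_mul_of_posDef (hV : V.PosDef) (hA : Tendsto A F (𝓝 V))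
    (hG : Tendsto (fun a => (H a)ᵀ * A a * H a) F (𝓝 G)) :
    Tendsto (fun a => (H a)ᵀ * V * H a) F (𝓝 G) := by
  obtain ⟨C, hC⟩ := exists_eventually_norm_sq_le_of_tendsto_transpose_mul_mul hV hA hG
  have hAV : Tendsto (fun a => ‖V - A a‖) F (𝓝 0) := by
    simpa [norm_sub_rev] using tendsto_iff_norm_sub_tendsto_zero.mp hA
  have hdiff : Tendsto (fun a => (H a)ᵀ * V * H a - (H a)ᵀ * A a * H a) F (𝓝 0) := by
    refine tendsto_zero_iff_norm_tendsto_zero.mpr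
      (squeeze_zero' (.of_forall fun _ => norm_nonneg _) ?_ (by simpa using hAV.const_mul C))
    filter_upwards [hC] with a ha
    exact (frobenius_norm_transpose_mul_mul_sub_le _ _ _).trans (by gcongr)
  simpa using hG.add hdiff

end Tendsto

theorem frobSq_eq_norm_sq {a b : ℕ} (M : Matrix (Fin a) (Fin b) ℝ) : frobSq M = ‖M‖ ^ 2 :=
  (frobenius_norm_sq M).symm

theorem stmt19_general (m : ℕ)
    (V : Matrix (Fin m) (Fin m) ℝ) (hV : V.PosDef)
    (L Lhat : ∀ p : ℕ, Matrix (Fin p) (Fin m) ℝ)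
    (H : ℕ → Matrix (Fin m) (Fin m) ℝ)
    (h1 : ∀ p : ℕ, m ≤ p → ((p : ℝ))⁻¹ • ((Lhat p)ᵀ * Lhat p) = (1 : Matrix (Fin m) (Fin m) ℝ))
    (h2 : ∀ i j, Tendsto (fun p : ℕ => ((p : ℝ))⁻¹ * ((L p)ᵀ * L p) i j) atTop (𝓝 (V i j)))
    (h3 : Tendsto (fun p : ℕ => ((p : ℝ))⁻¹ * frobSq (Lhat p - L p * H p)) atTop (𝓝 0)) :
    ∀ i j, Tendsto (fun p : ℕ => ((H p)ᵀ * V * H p) i j) atTop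
      (𝓝 ((1 : Matrix (Fin m) (Fin m) ℝ) i j)) := by
  set s : ℕ → ℝ := fun p => Real.sqrt (p : ℝ)⁻¹
  have hgram : ∀ p {k : ℕ} (X : Matrix (Fin k) (Fin m) ℝ),
      (s p • X)ᵀ * (s p • X) = (p : ℝ)⁻¹ • (Xᵀ * X) := fun p k X => by
    rw [transpose_smul, Matrix.smul_mul, Matrix.mul_smul, smul_smul, ← sq,
      Real.sq_sqrt (by positivity)]
  have hA : Tendsto (fun p : ℕ => (p : ℝ)⁻¹ • ((L p)ᵀ * L p)) atTop (𝓝 V) :=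
    tendsto_pi_nhds.mpr fun i => tendsto_pi_nhds.mpr fun j => by simpa using h2 i j
  have hLhat : ∀ᶠ p in atTop, (s p • Lhat p)ᵀ * (s p • Lhat p) = 1 := by
    filter_upwards [eventually_ge_atTop m] with p hp
    rw [hgram, h1 p hp]
  have hsub : Tendsto (fun p => ‖s p • Lhat p - s p • (L p * H p)‖) atTop (𝓝 0) := by
    refine (Real.sqrt_zero ▸ h3.sqrt).congr fun p => ?_
    rw [← smul_sub, norm_smul, frobSq_eq_norm_sq, Real.sqrt_mul (by positivity),
      Real.sqrt_sq (norm_nonneg _), Real.norm_of_nonneg (Real.sqrt_nonneg _)]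
  have hG : Tendsto (fun p => (H p)ᵀ * ((p : ℝ)⁻¹ • ((L p)ᵀ * L p)) * H p) atTop (𝓝 1) := by
    refine (tendsto_transpose_mul_self_of_tendsto_norm_sub hLhat hsub).congr fun p => ?_
    rw [hgram, transpose_mul, Matrix.mul_smul, Matrix.smul_mul, Matrix.mul_assoc,
      Matrix.mul_assoc, Matrix.mul_assoc]
  have hconj := tendsto_transpose_mul_mul_of_posDef hV hA hG
  exact fun i j => tendsto_pi_nhds.mp (tendsto_pi_nhds.mp hconj i) j

/-- If `(1/p)L̂ᵀL̂ = I_m`, `(1/p)LᵀL → V`, and `(1/p)‖L̂ − LĤ‖_F² → 0`, then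
`ĤᵀVĤ → I_m` (entrywise). -/
theorem stmt19 (m : ℕ) (hm : 1 ≤ m)
    (V : Matrix (Fin m) (Fin m) ℝ) (hV : V.PosDef)
    (L Lhat : ∀ p : ℕ, Matrix (Fin p) (Fin m) ℝ)
    (H : ℕ → Matrix (Fin m) (Fin m) ℝ)
    (h1 : ∀ p : ℕ, m ≤ p → ((p : ℝ))⁻¹ • ((Lhat p)ᵀ * Lhat p) = (1 : Matrix (Fin m) (Fin m) ℝ))
    (h2 : ∀ i j, Tendsto (fun p : ℕ => ((p : ℝ))⁻¹ * ((L p)ᵀ * L p) i j) atTop (𝓝 (V i j)))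
    (h3 : Tendsto (fun p : ℕ => ((p : ℝ))⁻¹ * frobSq (Lhat p - L p * H p)) atTop (𝓝 0)) :
    ∀ i j, Tendsto (fun p : ℕ => ((H p)ᵀ * V * H p) i j) atTop
      (𝓝 ((1 : Matrix (Fin m) (Fin m) ℝ) i j)) :=
  stmt19_general m V hV L Lhat H h1 h2 h3
end
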